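/- arXiv:1204.0069 — 10 statements merged into one kernel-verified Lean document; each statement's English description precedes it below -/
import Mathlib

section
/- Suppose D_iᵀAD_i is invertible and rank D_i = p for all 0 ≤ i ≤ k in the cCG iteration. Then the residue matrices R₀, R₁, …, R_{k+1} are mutually orthogonal: for all 0 ≤ i < j ≤ k+1, R_iᵀR_j = 0 (every column of R_i is orthogonal to every column of R_j). -/
open Matrix

/-- If `M` has trivial kernel (as `mulVec`) and `M * Z = 0`, then `Z = 0`. -/
private lemma cCG_cancel {q r : ℕ} (M : Matrix (Fin q) (Fin q) ℝ)
    (Z : Matrix (Fin q) (Fin r) ℝ)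
    (h : ∀ v, M.mulVec v = 0 → v = 0) (hMZ : M * Z = 0) : Z = 0 := by
  ext i j
  have hv : M.mulVec (fun l => Z l j) = 0 := by
    funext i'
    have := congrFun (congrFun hMZ i') j
    simpa [Matrix.mul_apply, Matrix.mulVec, dotProduct] using this
  simpa using congrFun (h _ hv) i

/-- If `Q` has trivial kernel, so does the Gram matrix `Qᵀ * Q`. -/
private lemma cCG_gram {n q : ℕ} (Q : Matrix (Fin n) (Fin q) ℝ)
    (hQ : ∀ v, Q.mulVec v = 0 → v = 0)
    (v : Fin q → ℝ) (h : (Qᵀ * Q).mulVec v = 0) : v = 0 := by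
  apply hQ
  have h2 : (Q.mulVec v) ⬝ᵥ (Q.mulVec v) = 0 := by
    have : v ⬝ᵥ (Qᵀ * Q).mulVec v = 0 := by rw [h]; simp
    rw [← Matrix.mulVec_mulVec, Matrix.dotProduct_mulVec, Matrix.vecMul_transpose] at this
    exact this
  exact dotProduct_self_eq_zero.mp h2

/-- If `D_iᵀAD_i` is invertible and `rank D_i = p` for all `0 ≤ i ≤ k`
in the cCG iteration, then the residue matrices `R₀, …, R_{k+1}` are mutually
orthogonal: for all `0 ≤ i < j ≤ k+1`, `R_iᵀR_j = 0`. -/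
theorem cCG_residues_mutually_orthogonal
    (n p : ℕ) (hn : 0 < n) (hp : 0 < p) (hpn : p ≤ n)
    (A : Matrix (Fin n) (Fin n) ℝ) (hA : A.PosDef)
    (b : Fin n → ℝ) (k : ℕ)
    (X R D : ℕ → Matrix (Fin n) (Fin p) ℝ)
    (α β : ℕ → Matrix (Fin p) (Fin p) ℝ)
    (hR : ∀ i, R i = A * X i - Matrix.vecMulVec b 1)
    (hD0 : D 0 = R 0)
    (hinv : ∀ i ≤ k, IsUnit ((D i)ᵀ * A * D i).det)
    (hrank : ∀ i ≤ k, (D i).rank = p)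
    (hα : ∀ i ≤ k, α i = -((R i)ᵀ * D i * ((D i)ᵀ * A * D i)⁻¹))
    (hX : ∀ i ≤ k, X (i + 1) = X i + D i * (α i)ᵀ)
    (hβ : ∀ i ≤ k, β i = -((R (i + 1))ᵀ * A * D i * ((D i)ᵀ * A * D i)⁻¹))
    (hDs : ∀ i ≤ k, D (i + 1) = R (i + 1) + D i * (β i)ᵀ)
    :
    ∀ i j : ℕ, i < j → j ≤ k + 1 → (R i)ᵀ * R j = 0 := by
  have hAt : Aᵀ = A := by simpa [Matrix.IsHermitian] using hA.isHermitian
  -- symmetry of DᵀAD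
  have hMsym : ∀ i, ((D i)ᵀ * A * D i)ᵀ = (D i)ᵀ * A * D i := by
    intro i; simp [Matrix.transpose_mul, hAt, Matrix.mul_assoc]
  have hMmul : ∀ i ≤ k, ((D i)ᵀ * A * D i) * ((D i)ᵀ * A * D i)⁻¹ = 1 :=
    fun i hi => Matrix.mul_nonsing_inv _ (hinv i hi)
  have hMker : ∀ i ≤ k, ∀ v, ((D i)ᵀ * A * D i).mulVec v = 0 → v = 0 := by
    intro i hi v hv
    have h1 : (((D i)ᵀ * A * D i)⁻¹ * ((D i)ᵀ * A * D i)).mulVec v = 0 := by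
      rw [← Matrix.mulVec_mulVec, hv, Matrix.mulVec_zero]
    rwa [Matrix.nonsing_inv_mul _ (hinv i hi), Matrix.one_mulVec] at h1
  have hαT : ∀ i ≤ k, (α i)ᵀ = -(((D i)ᵀ * A * D i)⁻¹ * ((D i)ᵀ * R i)) := by
    intro i hi
    rw [hα i hi]
    simp [Matrix.transpose_mul, Matrix.transpose_nonsing_inv, hMsym i, hAt, Matrix.mul_assoc]
  have hβT : ∀ i ≤ k, (β i)ᵀ = -(((D i)ᵀ * A * D i)⁻¹ * ((D i)ᵀ * A * R (i + 1))) := by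
    intro i hi
    rw [hβ i hi]
    simp [Matrix.transpose_mul, Matrix.transpose_nonsing_inv, hMsym i, hAt, Matrix.mul_assoc]
  have hRrec : ∀ i ≤ k, R (i + 1) = R i + A * D i * (α i)ᵀ := by
    intro i hi
    rw [hR (i + 1), hR i, hX i hi, Matrix.mul_add, ← Matrix.mul_assoc]
    abel
  -- Main induction: (a) Dᵢᵀ Rₘ = 0 for i < m;  (b) Dᵢᵀ A Dₘ = 0 for i < m ≤ k.
  have key : ∀ m, m ≤ k + 1 →
      (∀ i < m, (D i)ᵀ * R m = 0) ∧ (m ≤ k → ∀ i < m, (D i)ᵀ * A * D m = 0) := by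
    intro m
    induction m using Nat.strong_induction_on with
    | _ m ih =>
      intro hm
      match m with
      | 0 => exact ⟨fun i hi => absurd hi (Nat.not_lt_zero i),
               fun _ i hi => absurd hi (Nat.not_lt_zero i)⟩
      | j + 1 =>
        have hjk : j ≤ k := by omega
        have hRj1 : R (j + 1) = R j + A * D j * (α j)ᵀ := hRrec j hjk
        -- part (a)
        have ha : ∀ i < j + 1, (D i)ᵀ * R (j + 1) = 0 := by
          intro i hij1
          rw [hRj1, Matrix.mul_add]
          rcases Nat.lt_succ_iff_lt_or_eq.mp hij1 with hij | rfl
          · have h1 : (D i)ᵀ * R j = 0 := (ih j (by omega) (by omega)).1 i hij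
            have h2 : (D i)ᵀ * A * D j = 0 := (ih j (by omega) (by omega)).2 hjk i hij
            have h3 : (D i)ᵀ * (A * D j * (α j)ᵀ) = ((D i)ᵀ * A * D j) * (α j)ᵀ := by
              simp [Matrix.mul_assoc]
            rw [h1, h3, h2, Matrix.zero_mul, add_zero]
          · rw [hαT i hjk]
            have h3 : (D i)ᵀ * (A * D i * -(((D i)ᵀ * A * D i)⁻¹ * ((D i)ᵀ * R i)))
                = -((((D i)ᵀ * A * D i) * ((D i)ᵀ * A * D i)⁻¹) * ((D i)ᵀ * R i)) := by
              simp [Matrix.mul_assoc]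
            rw [h3, hMmul i hjk, Matrix.one_mul, add_neg_cancel]
        -- part (b)
        have hb : j + 1 ≤ k → ∀ i < j + 1, (D i)ᵀ * A * D (j + 1) = 0 := by
          intro hj1k i hij1
          have hDj1 : D (j + 1) = R (j + 1) + D j * (β j)ᵀ := hDs j hjk
          rcases Nat.lt_succ_iff_lt_or_eq.mp hij1 with hij | rfl
          · -- i < j
            have hik : i ≤ k := by omega
            have hBij : (D i)ᵀ * A * D j = 0 := (ih j (by omega) (by omega)).2 hjk i hij
            -- residual orthogonality at level j+1
            have hRorth : ∀ l < j + 1, (R l)ᵀ * R (j + 1) = 0 := by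
              intro l hl
              match l with
              | 0 => rw [← hD0]; exact ha 0 hl
              | l' + 1 =>
                have hl'k : l' ≤ k := by omega
                have hRl : R (l' + 1) = D (l' + 1) - D l' * (β l')ᵀ := by
                  rw [hDs l' hl'k]; abel
                rw [hRl, Matrix.transpose_sub, Matrix.sub_mul, ha (l' + 1) hl,
                  Matrix.transpose_mul, Matrix.transpose_transpose, Matrix.mul_assoc,
                  ha l' (by omega)]
                simp
            -- Dᵢᵀ Rᵢ = Rᵢᵀ Rᵢ
            have hDiRi : (D i)ᵀ * R i = (R i)ᵀ * R i := by
              match i with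
              | 0 => rw [hD0]
              | i' + 1 =>
                have hi'k : i' ≤ k := by omega
                rw [hDs i' hi'k, Matrix.transpose_add, Matrix.add_mul, Matrix.transpose_mul,
                  Matrix.transpose_transpose, Matrix.mul_assoc,
                  (ih (i' + 1) (by omega) (by omega)).1 i' (by omega)]
                simp
            -- R i has trivial kernel
            have hRiker : ∀ v, (R i).mulVec v = 0 → v = 0 := by
              intro v hv
              apply hMker i hik
              match i with
              | 0 =>
                rw [← Matrix.mulVec_mulVec, hD0, hv, Matrix.mulVec_zero]
              | i' + 1 =>
                have hi'k : i' ≤ k := by omega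
                have hDv : (D (i' + 1)).mulVec v = ((D i' * (β i')ᵀ)).mulVec v := by
                  rw [hDs i' hi'k, Matrix.add_mulVec, hv, zero_add]
                have hconj : (D (i' + 1))ᵀ * A * D i' = 0 := by
                  have h0 : (D i')ᵀ * A * D (i' + 1) = 0 :=
                    (ih (i' + 1) (by omega) (by omega)).2 (by omega) i' (by omega)
                  have := congrArg Matrix.transpose h0
                  simpa [Matrix.transpose_mul, hAt, Matrix.mul_assoc] using this
                rw [← Matrix.mulVec_mulVec, hDv, Matrix.mulVec_mulVec, ← Matrix.mul_assoc,
                  hconj, Matrix.zero_mul, Matrix.zero_mulVec]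
            -- αᵢ (Dᵢᵀ A R_{j+1}) = (R_{i+1} - R_i)ᵀ R_{j+1} = 0
            have hADα : A * D i * (α i)ᵀ = R (i + 1) - R i := by rw [hRrec i hik]; abel
            have h1 : α i * ((D i)ᵀ * A) = (R (i + 1))ᵀ - (R i)ᵀ := by
              have := congrArg Matrix.transpose hADα
              simpa [Matrix.transpose_mul, hAt, Matrix.mul_assoc] using this
            have h0 : α i * ((D i)ᵀ * (A * R (j + 1))) = 0 := by
              calc α i * ((D i)ᵀ * (A * R (j + 1)))
                  = (α i * ((D i)ᵀ * A)) * R (j + 1) := by simp [Matrix.mul_assoc]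
                _ = ((R (i + 1))ᵀ - (R i)ᵀ) * R (j + 1) := by rw [h1]
                _ = 0 := by
                    rw [Matrix.sub_mul, hRorth (i + 1) (by omega), hRorth i (by omega),
                      sub_zero]
            have hαi : α i = -((R i)ᵀ * R i * ((D i)ᵀ * A * D i)⁻¹) := by
              have hRD : (R i)ᵀ * D i = (R i)ᵀ * R i := by
                have := congrArg Matrix.transpose hDiRi
                simpa [Matrix.transpose_mul] using this
              rw [hα i hik, hRD]
            -- deduce Dᵢᵀ A R_{j+1} = 0
            have hW : ((R i)ᵀ * R i) *
                (((D i)ᵀ * A * D i)⁻¹ * ((D i)ᵀ * (A * R (j + 1)))) = 0 := by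
              have := h0
              rw [hαi] at this
              rw [← Matrix.mul_assoc] at this ⊢
              simpa [Matrix.mul_assoc] using this
            have hW0 : ((D i)ᵀ * A * D i)⁻¹ * ((D i)ᵀ * (A * R (j + 1))) = 0 :=
              cCG_cancel _ _ (fun v hv => cCG_gram (R i) hRiker v hv) hW
            have hT : (D i)ᵀ * (A * R (j + 1)) = 0 := by
              have h2 : (((D i)ᵀ * A * D i) * ((D i)ᵀ * A * D i)⁻¹) *
                  ((D i)ᵀ * (A * R (j + 1))) = 0 := by
                rw [Matrix.mul_assoc, hW0, Matrix.mul_zero]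
              rwa [hMmul i hik, Matrix.one_mul] at h2
            -- conclude
            rw [hDj1, Matrix.mul_add]
            have h4 : (D i)ᵀ * A * R (j + 1) = 0 := by
              rw [Matrix.mul_assoc]; exact hT
            have h5 : (D i)ᵀ * A * (D j * (β j)ᵀ) = ((D i)ᵀ * A * D j) * (β j)ᵀ := by
              simp [Matrix.mul_assoc]
            rw [h4, h5, hBij, Matrix.zero_mul, add_zero]
          · -- i = j
            rw [hDj1, Matrix.mul_add, hβT i hjk]
            have h3 : (D i)ᵀ * A * (D i * -(((D i)ᵀ * A * D i)⁻¹ * ((D i)ᵀ * A * R (i + 1))))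
                = -((((D i)ᵀ * A * D i) * ((D i)ᵀ * A * D i)⁻¹) *
                    ((D i)ᵀ * A * R (i + 1))) := by
              simp [Matrix.mul_assoc]
            rw [h3, hMmul i hjk, Matrix.one_mul, add_neg_cancel]
        exact ⟨ha, hb⟩
  -- Conclude residual orthogonality from part (a)
  intro i j hij hjk1
  have haj := (key j hjk1).1
  match i with
  | 0 => rw [← hD0]; exact haj 0 hij
  | i' + 1 =>
    have hi'k : i' ≤ k := by omega
    have hRi : R (i' + 1) = D (i' + 1) - D i' * (β i')ᵀ := by rw [hDs i' hi'k]; abel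
    rw [hRi, Matrix.transpose_sub, Matrix.sub_mul, haj (i' + 1) hij, Matrix.transpose_mul,
      Matrix.transpose_transpose, Matrix.mul_assoc, haj i' (by omega)]
    simp
end

section
/- Suppose D_iᵀAD_i is invertible and rank D_i = p for all 0 ≤ i ≤ k in the cCG iteration. Then the direction matrices D₀, D₁, …, D_{k+1} are mutually A-orthogonal: for all 0 ≤ i < j ≤ k+1, D_iᵀAD_j = 0 (every column of D_i is A-orthogonal to every column of D_j). -/
open Matrix

/-- If `D_iᵀAD_i` is invertible and `rank D_i = p` for all `0 ≤ i ≤ k`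
in the cCG iteration, then the direction matrices `D₀, …, D_{k+1}` are mutually
`A`-orthogonal: for all `0 ≤ i < j ≤ k+1`, `D_iᵀAD_j = 0`. -/
theorem cCG_directions_mutually_A_orthogonal
    (n p : ℕ) (hn : 0 < n) (hp : 0 < p) (hpn : p ≤ n)
    (A : Matrix (Fin n) (Fin n) ℝ) (hA : A.PosDef)
    (b : Fin n → ℝ) (k : ℕ)
    (X R D : ℕ → Matrix (Fin n) (Fin p) ℝ)
    (α β : ℕ → Matrix (Fin p) (Fin p) ℝ)
    (hR : ∀ i, R i = A * X i - Matrix.vecMulVec b 1)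
    (hD0 : D 0 = R 0)
    (hinv : ∀ i ≤ k, IsUnit ((D i)ᵀ * A * D i).det)
    (hrank : ∀ i ≤ k, (D i).rank = p)
    (hα : ∀ i ≤ k, α i = -((R i)ᵀ * D i * ((D i)ᵀ * A * D i)⁻¹))
    (hX : ∀ i ≤ k, X (i + 1) = X i + D i * (α i)ᵀ)
    (hβ : ∀ i ≤ k, β i = -((R (i + 1))ᵀ * A * D i * ((D i)ᵀ * A * D i)⁻¹))
    (hDs : ∀ i ≤ k, D (i + 1) = R (i + 1) + D i * (β i)ᵀ)
    :
    ∀ i j : ℕ, i < j → j ≤ k + 1 → (D i)ᵀ * A * D j = 0 := by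
  have hAT : Aᵀ = A := by
    have h : Aᴴ = A := hA.1
    rwa [Matrix.conjTranspose_eq_transpose_of_trivial] at h
  -- symmetry of the Gram matrices
  have hS : ∀ m, ((D m)ᵀ * A * D m)ᵀ = (D m)ᵀ * A * D m := by
    intro m
    simp [Matrix.transpose_mul, hAT, Matrix.mul_assoc]
  -- residual recursion
  have hRstep : ∀ m ≤ k, R (m + 1) = R m + A * D m * (α m)ᵀ := by
    intro m hm
    rw [hR (m + 1), hR m, hX m hm, Matrix.mul_add, ← Matrix.mul_assoc]
    abel
  -- transpose of α
  have hαT : ∀ m ≤ k, (α m)ᵀ = -(((D m)ᵀ * A * D m)⁻¹ * ((D m)ᵀ * R m)) := by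
    intro m hm
    rw [hα m hm]
    simp [Matrix.transpose_mul, Matrix.transpose_nonsing_inv, hS m, hAT, Matrix.mul_assoc]
  -- transpose of β
  have hβT : ∀ m ≤ k, (β m)ᵀ = -(((D m)ᵀ * A * D m)⁻¹ * ((D m)ᵀ * A * R (m + 1))) := by
    intro m hm
    rw [hβ m hm]
    simp [Matrix.transpose_mul, Matrix.transpose_nonsing_inv, hS m, hAT, Matrix.mul_assoc]
  -- D_mᵀ R_{m+1} = 0
  have hDR1 : ∀ m ≤ k, (D m)ᵀ * R (m + 1) = 0 := by
    intro m hm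
    rw [hRstep m hm, Matrix.mul_add, hαT m hm]
    have hc : (D m)ᵀ * (A * D m * -(((D m)ᵀ * A * D m)⁻¹ * ((D m)ᵀ * R m)))
        = -((D m)ᵀ * A * D m * (((D m)ᵀ * A * D m)⁻¹ * ((D m)ᵀ * R m))) := by
      simp [Matrix.mul_assoc]
    rw [hc, ← Matrix.mul_assoc ((D m)ᵀ * A * D m),
      Matrix.mul_nonsing_inv _ (hinv m hm), Matrix.one_mul]
    simp
  -- D_mᵀ A D_{m+1} = 0
  have hDAD1 : ∀ m ≤ k, (D m)ᵀ * A * D (m + 1) = 0 := by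
    intro m hm
    rw [hDs m hm, Matrix.mul_add, hβT m hm]
    have hc : (D m)ᵀ * A * (D m * -(((D m)ᵀ * A * D m)⁻¹ * ((D m)ᵀ * A * R (m + 1))))
        = -((D m)ᵀ * A * D m * (((D m)ᵀ * A * D m)⁻¹ * ((D m)ᵀ * A * R (m + 1)))) := by
      simp [Matrix.mul_assoc]
    rw [hc, ← Matrix.mul_assoc ((D m)ᵀ * A * D m),
      Matrix.mul_nonsing_inv _ (hinv m hm), Matrix.one_mul]
    simp
  -- injectivity of D_m
  have hDinj : ∀ m ≤ k, ∀ v : Fin p → ℝ, D m *ᵥ v = 0 → v = 0 := by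
    intro m hm v hv
    have h1 : ((D m)ᵀ * A * D m) *ᵥ v = 0 := by
      rw [← Matrix.mulVec_mulVec, hv, Matrix.mulVec_zero]
    have h2 := congrArg (fun w => (((D m)ᵀ * A * D m)⁻¹) *ᵥ w) h1
    simpa [Matrix.mulVec_mulVec, Matrix.nonsing_inv_mul _ (hinv m hm)] using h2
  -- injectivity of R_m
  have hRinj : ∀ m ≤ k, ∀ v : Fin p → ℝ, R m *ᵥ v = 0 → v = 0 := by
    intro m hm v hv
    match m with
    | 0 =>
      exact hDinj 0 hm v (by rwa [hD0])
    | (m' + 1) =>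
      have hm' : m' ≤ k := Nat.le_of_succ_le hm
      have hDv : D (m' + 1) *ᵥ v = (D m' * (β m')ᵀ) *ᵥ v := by
        rw [hDs m' hm', Matrix.add_mulVec, hv, zero_add]
      have hzero : (D (m' + 1))ᵀ * A * (D m' * (β m')ᵀ) = 0 := by
        have : (D (m' + 1))ᵀ * A * D m' = 0 := by
          have h := congrArg Matrix.transpose (hDAD1 m' hm')
          simpa [Matrix.transpose_mul, hAT, Matrix.mul_assoc] using h
        rw [← Matrix.mul_assoc, this, Matrix.zero_mul]
      have h1 : ((D (m' + 1))ᵀ * A * D (m' + 1)) *ᵥ v = 0 := by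
        rw [← Matrix.mulVec_mulVec, hDv, Matrix.mulVec_mulVec, hzero, Matrix.zero_mulVec]
      have h2 := congrArg (fun w => (((D (m' + 1))ᵀ * A * D (m' + 1))⁻¹) *ᵥ w) h1
      simpa [Matrix.mulVec_mulVec, Matrix.nonsing_inv_mul _ (hinv (m' + 1) hm)] using h2
  -- R_mᵀ R_m is invertible
  have hRRunit : ∀ m ≤ k, IsUnit ((R m)ᵀ * R m).det := by
    intro m hm
    rw [isUnit_iff_ne_zero]
    intro hdet
    obtain ⟨v, hv0, hv⟩ := (Matrix.exists_mulVec_eq_zero_iff).2 hdet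
    apply hv0
    apply hRinj m hm
    rw [← dotProduct_self_eq_zero (v := R m *ᵥ v)]
    calc (R m *ᵥ v) ⬝ᵥ (R m *ᵥ v) = v ⬝ᵥ ((R m)ᵀ *ᵥ (R m *ᵥ v)) := by
          rw [Matrix.dotProduct_mulVec v, Matrix.vecMul_transpose]
      _ = v ⬝ᵥ (((R m)ᵀ * R m) *ᵥ v) := by rw [Matrix.mulVec_mulVec]
      _ = 0 := by rw [hv, dotProduct_zero]
  -- R_mᵀ D_m = R_mᵀ R_m
  have hRD : ∀ m ≤ k, (R m)ᵀ * D m = (R m)ᵀ * R m := by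
    intro m hm
    match m with
    | 0 => rw [hD0]
    | (m' + 1) =>
      have hm' : m' ≤ k := Nat.le_of_succ_le hm
      have h0 : (R (m' + 1))ᵀ * D m' = 0 := by
        have h := congrArg Matrix.transpose (hDR1 m' hm')
        simpa [Matrix.transpose_mul] using h
      rw [hDs m' hm', Matrix.mul_add, ← Matrix.mul_assoc, h0, Matrix.zero_mul, add_zero]
  -- α_mᵀ is invertible
  have hαunit : ∀ m ≤ k, IsUnit ((α m)ᵀ).det := by
    intro m hm
    have hDRm : (D m)ᵀ * R m = (R m)ᵀ * R m := by
      have h := congrArg Matrix.transpose (hRD m hm)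
      simpa [Matrix.transpose_mul] using h
    have hform : (α m)ᵀ = -(((D m)ᵀ * A * D m)⁻¹ * ((R m)ᵀ * R m)) := by
      rw [hαT m hm, hDRm]
    rw [hform]
    rw [Matrix.det_neg, Matrix.det_mul]
    refine IsUnit.mul (IsUnit.pow _ ?_) (IsUnit.mul ?_ (hRRunit m hm))
    · exact isUnit_one.neg
    · exact Matrix.isUnit_nonsing_inv_det _ (hinv m hm)
  -- A D_m in terms of residuals
  have hAD : ∀ m ≤ k, A * D m = (R (m + 1) - R m) * ((α m)ᵀ)⁻¹ := by
    intro m hm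
    have h1 : R (m + 1) - R m = A * D m * (α m)ᵀ := by
      rw [hRstep m hm]; abel
    rw [h1, Matrix.mul_assoc, Matrix.mul_nonsing_inv _ (hαunit m hm), Matrix.mul_one]
  -- the main induction
  have key : ∀ j, j ≤ k + 1 → ∀ i < j,
      (D i)ᵀ * A * D j = 0 ∧ (D i)ᵀ * R j = 0 ∧ (R i)ᵀ * R j = 0 := by
    intro j
    induction j with
    | zero => intro _ i hi; omega
    | succ j IH =>
      intro hj
      have hjk : j ≤ k := Nat.lt_succ_iff.mp hj
      have IH' := IH (Nat.le_succ_of_le hjk)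
      -- (2) at j+1
      have h2 : ∀ i < j + 1, (D i)ᵀ * R (j + 1) = 0 := by
        intro i hi
        rcases Nat.lt_succ_iff_lt_or_eq.mp hi with hi' | rfl
        · obtain ⟨had, hdr, -⟩ := IH' i hi'
          rw [hRstep j hjk, Matrix.mul_add, hdr, ← Matrix.mul_assoc, ← Matrix.mul_assoc,
            had, Matrix.zero_mul, add_zero]
        · exact hDR1 i hjk
      -- (3) at j+1
      have h3 : ∀ i < j + 1, (R i)ᵀ * R (j + 1) = 0 := by
        intro i hi
        match i with
        | 0 => rw [← hD0]; exact h2 0 hi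
        | (m + 1) =>
          have hmk : m ≤ k := by omega
          have hβm : (R (m + 1))ᵀ = (D (m + 1))ᵀ - β m * (D m)ᵀ := by
            have h := congrArg Matrix.transpose (hDs m hmk)
            rw [Matrix.transpose_add, Matrix.transpose_mul, Matrix.transpose_transpose] at h
            rw [h]; abel
          rw [hβm, Matrix.sub_mul, h2 (m + 1) hi, Matrix.mul_assoc,
            h2 m (by omega), Matrix.mul_zero, sub_zero]
      -- (1) at j+1
      have h1 : ∀ i < j + 1, (D i)ᵀ * A * D (j + 1) = 0 := by
        intro i hi
        rcases Nat.lt_succ_iff_lt_or_eq.mp hi with hi' | rfl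
        · have hik : i ≤ k := by omega
          have hDAR : (D i)ᵀ * A * R (j + 1) = 0 := by
            have hDA : (D i)ᵀ * A = (((α i)ᵀ)⁻¹)ᵀ * (R (i + 1) - R i)ᵀ := by
              have h := congrArg Matrix.transpose (hAD i hik)
              rw [Matrix.transpose_mul, hAT] at h
              rw [h, Matrix.transpose_mul]
            rw [hDA, Matrix.mul_assoc, Matrix.transpose_sub, Matrix.sub_mul,
              h3 (i + 1) (by omega), h3 i (by omega), sub_zero, Matrix.mul_zero]
          rw [hDs j hjk, Matrix.mul_add, hDAR, zero_add, ← Matrix.mul_assoc,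
            (IH' i hi').1, Matrix.zero_mul]
        · exact hDAD1 i hjk
      exact fun i hi => ⟨h1 i hi, h2 i hi, h3 i hi⟩
  intro i j hij hjk1
  exact (key j hjk1 i hij).1
end

section
/- Suppose D_iᵀAD_i is invertible and rank D_i = p for all 0 ≤ i ≤ k in the cCG iteration. Then the three subspaces span[R_i]₀^k, span[D_i]₀^k, and span[AⁱR₀]₀^k of ℝⁿ coincide. -/
/-!
Both recurrences `R_{i+1} = R_i + A D_i α_iᵀ` and `D_{i+1} = R_{i+1} + D_i β_iᵀ` add to a
block combinations of columns of earlier blocks, multiplied at most once by `A`; by induction the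
residuals and the directions span the same space, contained in the block Krylov space. Conversely
`A D_i = (R_{i+1} - R_i) (α_iᵀ)⁻¹` puts `A` times that space back into the next one, provided
`α_i` is invertible. The coefficients are chosen so that `D_iᵀ R_{i+1} = 0` and
`D_iᵀ A D_{i+1} = 0`; the first gives `R_iᵀ D_i = R_iᵀ R_i`, the second shows that `R_i` inherits
full column rank from `D_i`, so `α_i = -R_iᵀ R_i (D_iᵀ A D_i)⁻¹` is invertible.
-/

open Matrix

/-- The span in `ℝⁿ` of all the columns of the matrices `M 0, …, M k`. -/
def colSpan (n p : ℕ) (k : ℕ) (M : ℕ → Matrix (Fin n) (Fin p) ℝ) :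
    Submodule ℝ (Fin n → ℝ) :=
  Submodule.span ℝ {v : Fin n → ℝ | ∃ i ≤ k, ∃ j : Fin p, v = fun r => M i r j}

namespace Matrix

variable {l m o K : Type*}

section CommRing

variable [CommRing K]

theorem range_mulVecLin_mul_le [Fintype m] [Fintype o] (N : Matrix l m K) (C : Matrix m o K) :
    LinearMap.range (N * C).mulVecLin ≤ LinearMap.range N.mulVecLin := by
  rw [mulVecLin_mul]
  exact LinearMap.range_comp_le_range _ _

theorem range_mulVecLin_mul [Fintype m] [Fintype o] (A : Matrix l m K) (N : Matrix m o K) :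
    LinearMap.range (A * N).mulVecLin = (LinearMap.range N.mulVecLin).map A.mulVecLin := by
  rw [mulVecLin_mul, LinearMap.range_comp]

theorem range_mulVecLin_add_le [Fintype m] (M N : Matrix l m K) :
    LinearMap.range (M + N).mulVecLin ≤
      LinearMap.range M.mulVecLin ⊔ LinearMap.range N.mulVecLin := by
  rw [mulVecLin_add]
  exact LinearMap.range_add_le _ _

theorem range_mulVecLin_sub_le [Fintype m] (M N : Matrix l m K) :
    LinearMap.range (M - N).mulVecLin ≤
      LinearMap.range M.mulVecLin ⊔ LinearMap.range N.mulVecLin := by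
  rintro - ⟨v, rfl⟩
  simpa [sub_mulVec] using
    Submodule.sub_mem_sup (LinearMap.mem_range_self M.mulVecLin v)
      (LinearMap.mem_range_self N.mulVecLin v)

theorem sup_range_mulVecLin_add_of_le [Fintype m] {S : Submodule K (l → K)}
    (X Y : Matrix l m K) (hY : LinearMap.range Y.mulVecLin ≤ S) :
    S ⊔ LinearMap.range (X + Y).mulVecLin = S ⊔ LinearMap.range X.mulVecLin := by
  refine le_antisymm (sup_le le_sup_left ?_) (sup_le le_sup_left ?_)
  · exact (range_mulVecLin_add_le X Y).trans (sup_le le_sup_right (hY.trans le_sup_left))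
  · calc LinearMap.range X.mulVecLin = LinearMap.range (X + Y - Y).mulVecLin := by
          rw [add_sub_cancel_right]
      _ ≤ LinearMap.range (X + Y).mulVecLin ⊔ LinearMap.range Y.mulVecLin :=
          range_mulVecLin_sub_le _ _
      _ ≤ S ⊔ LinearMap.range (X + Y).mulVecLin :=
          sup_le le_sup_right (hY.trans le_sup_left)

theorem mul_sub_mul_nonsing_inv_mul_eq_zero [Fintype l] [Fintype m] [DecidableEq m]
    {M : Matrix m l K} {N : Matrix l m K} (h : IsUnit (M * N).det) (Y : Matrix l o K) :
    M * (Y - N * ((M * N)⁻¹ * (M * Y))) = 0 := by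
  rw [Matrix.mul_sub, ← Matrix.mul_assoc M N, ← Matrix.mul_assoc (M * N),
    mul_nonsing_inv _ h, Matrix.one_mul, sub_self]

theorem transpose_mul_mul_nonsing_inv_of_isSymm [Fintype l] [Fintype m] [DecidableEq m]
    {A : Matrix l l K} (hA : A.IsSymm) (X : Matrix l o K) (D : Matrix l m K) :
    (Xᵀ * D * (Dᵀ * A * D)⁻¹)ᵀ = (Dᵀ * A * D)⁻¹ * (Dᵀ * X) := by
  have hG : (Dᵀ * A * D)ᵀ = Dᵀ * A * D := by
    rw [transpose_mul, transpose_mul, transpose_transpose, hA.eq, Matrix.mul_assoc]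
  rw [transpose_mul, transpose_nonsing_inv, hG, transpose_mul, transpose_transpose]

theorem ker_mulVecLin_eq_bot_of_eq_add_mul [Fintype l] [Fintype m] [Fintype o] [DecidableEq m]
    {M : Matrix m l K} {D : Matrix l m K} {D' R' : Matrix l o K} {B : Matrix m o K}
    (hG : IsUnit (M * D).det) (hMD' : M * D' = 0) (hD' : LinearMap.ker D'.mulVecLin = ⊥)
    (h : D' = R' + D * B) : LinearMap.ker R'.mulVecLin = ⊥ := by
  rw [ker_mulVecLin_eq_bot_iff] at hD' ⊢
  intro v hv
  have hD'v : D' *ᵥ v = D *ᵥ (B *ᵥ v) := by rw [h, add_mulVec, hv, zero_add, mulVec_mulVec]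
  have hMDBv : (M * D) *ᵥ (B *ᵥ v) = 0 := by
    rw [← mulVec_mulVec, ← hD'v, mulVec_mulVec, hMD', zero_mulVec]
  have hBv : B *ᵥ v = 0 :=
    calc B *ᵥ v = (M * D)⁻¹ *ᵥ ((M * D) *ᵥ (B *ᵥ v)) := by
          rw [mulVec_mulVec, nonsing_inv_mul _ hG, one_mulVec]
      _ = 0 := by rw [hMDBv, mulVec_zero]
  exact hD' v (by rw [hD'v, hBv, mulVec_zero])

end CommRing

section Field

variable [Field K]

theorem ker_mulVecLin_eq_bot_of_rank_eq [Fintype m] {M : Matrix l m K}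
    (h : M.rank = Fintype.card m) : LinearMap.ker M.mulVecLin = ⊥ := by
  have := LinearMap.finrank_range_add_finrank_ker M.mulVecLin
  rw [← rank, h, Module.finrank_fintype_fun_eq_card] at this
  exact Submodule.finrank_eq_zero.mp (by omega)

theorem isUnit_det_neg_transpose_mul_self_mul_nonsing_inv [Fintype l] [Fintype m]
    [DecidableEq m] [LinearOrder K] [IsStrictOrderedRing K] {R : Matrix l m K}
    (hR : LinearMap.ker R.mulVecLin = ⊥) {G : Matrix m m K} (hG : IsUnit G.det) :
    IsUnit (-(Rᵀ * R * G⁻¹)).det := by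
  have hRR : IsUnit (Rᵀ * R).det := by
    rw [← isUnit_iff_isUnit_det, ← mulVec_injective_iff_isUnit, ← coe_mulVecLin,
      ← LinearMap.ker_eq_bot, ker_mulVecLin_transpose_mul_self, hR]
  rw [det_neg, det_mul]
  exact (isUnit_one.neg.pow _).mul (hRR.mul (isUnit_nonsing_inv_det _ hG))

end Field

end Matrix

section colSpan

variable {n p k : ℕ} {M : ℕ → Matrix (Fin n) (Fin p) ℝ}

theorem colSpan_le_iff {S : Submodule ℝ (Fin n → ℝ)} :
    colSpan n p k M ≤ S ↔ ∀ i ≤ k, LinearMap.range (M i).mulVecLin ≤ S := by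
  simp only [colSpan, Submodule.span_le, range_mulVecLin, Set.range_subset_iff,
    Set.ofPred_subset]
  exact ⟨fun h i hi j => h _ ⟨i, hi, j, rfl⟩, by rintro h _ ⟨i, hi, j, rfl⟩; exact h i hi j⟩

theorem range_mulVecLin_le_colSpan {i : ℕ} (hi : i ≤ k) :
    LinearMap.range (M i).mulVecLin ≤ colSpan n p k M :=
  colSpan_le_iff.mp le_rfl i hi

theorem colSpan_mono {m : ℕ} (h : m ≤ k) : colSpan n p m M ≤ colSpan n p k M :=
  colSpan_le_iff.mpr fun _ hi => range_mulVecLin_le_colSpan (hi.trans h)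

theorem colSpan_zero : colSpan n p 0 M = LinearMap.range (M 0).mulVecLin :=
  le_antisymm (colSpan_le_iff.mpr fun i hi => by rw [Nat.le_zero.mp hi])
    (range_mulVecLin_le_colSpan le_rfl)

theorem colSpan_succ :
    colSpan n p (k + 1) M = colSpan n p k M ⊔ LinearMap.range (M (k + 1)).mulVecLin := by
  refine le_antisymm (colSpan_le_iff.mpr fun i hi => ?_)
    (sup_le (colSpan_mono k.le_succ) (range_mulVecLin_le_colSpan le_rfl))
  rcases Nat.le_succ_iff.mp hi with hi | rfl
  · exact (range_mulVecLin_le_colSpan hi).trans le_sup_left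
  · exact le_sup_right

theorem map_mulVecLin_colSpan (A : Matrix (Fin n) (Fin n) ℝ) :
    (colSpan n p k M).map A.mulVecLin = colSpan n p k (fun i => A * M i) := by
  refine le_antisymm (Submodule.map_le_iff_le_comap.mpr (colSpan_le_iff.mpr fun i hi => ?_))
    (colSpan_le_iff.mpr fun i hi => ?_)
  · rw [← Submodule.map_le_iff_le_comap, ← range_mulVecLin_mul A (M i)]
    exact range_mulVecLin_le_colSpan (M := fun i => A * M i) hi
  · rw [range_mulVecLin_mul]
    exact Submodule.map_mono (range_mulVecLin_le_colSpan hi)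

theorem map_mulVecLin_colSpan_pow_mul_le (A : Matrix (Fin n) (Fin n) ℝ)
    (N : Matrix (Fin n) (Fin p) ℝ) :
    (colSpan n p k fun i => A ^ i * N).map A.mulVecLin ≤
      colSpan n p (k + 1) fun i => A ^ i * N := by
  rw [map_mulVecLin_colSpan]
  refine colSpan_le_iff.mpr fun i hi => ?_
  rw [← Matrix.mul_assoc, ← pow_succ']
  exact range_mulVecLin_le_colSpan (M := fun i => A ^ i * N) (Nat.succ_le_succ hi)

end colSpan

section BlockRecurrence

variable {n p k : ℕ} {R D : ℕ → Matrix (Fin n) (Fin p) ℝ}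

theorem colSpan_eq_of_succ_eq_add_mul {B : ℕ → Matrix (Fin p) (Fin p) ℝ} (h0 : D 0 = R 0)
    (hD : ∀ i < k, D (i + 1) = R (i + 1) + D i * B i) :
    colSpan n p k R = colSpan n p k D := by
  induction k with
  | zero => rw [colSpan_zero, colSpan_zero, h0]
  | succ k ih =>
    have hS := ih fun i hi => hD i (hi.trans k.lt_succ_self)
    rw [colSpan_succ, colSpan_succ, hD k k.lt_succ_self, ← hS,
      sup_range_mulVecLin_add_of_le]
    refine (range_mulVecLin_mul_le _ _).trans ?_
    rw [hS]
    exact range_mulVecLin_le_colSpan le_rfl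

theorem colSpan_le_colSpan_pow_mul (A : Matrix (Fin n) (Fin n) ℝ)
    {B C : ℕ → Matrix (Fin p) (Fin p) ℝ} (h0 : D 0 = R 0)
    (hR : ∀ i < k, R (i + 1) = R i + A * D i * C i)
    (hD : ∀ i < k, D (i + 1) = R (i + 1) + D i * B i) :
    colSpan n p k D ≤ colSpan n p k fun i => A ^ i * R 0 := by
  set K := fun m => colSpan n p m fun i => A ^ i * R 0
  have key : ∀ i ≤ k, LinearMap.range (R i).mulVecLin ≤ K i ∧
      LinearMap.range (D i).mulVecLin ≤ K i := by
    intro i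
    induction i with
    | zero =>
      intro _
      have hR0 : LinearMap.range (R 0).mulVecLin ≤ K 0 := by
        simpa only [pow_zero, Matrix.one_mul] using
          range_mulVecLin_le_colSpan (M := fun i => A ^ i * R 0) (k := 0) le_rfl
      exact ⟨hR0, h0 ▸ hR0⟩
    | succ i ih =>
      intro hi
      obtain ⟨hRi, hDi⟩ := ih (Nat.le_of_succ_le hi)
      have hRi' : LinearMap.range (R (i + 1)).mulVecLin ≤ K (i + 1) := by
        rw [hR i hi]
        refine (range_mulVecLin_add_le _ _).trans (sup_le (hRi.trans (colSpan_mono i.le_succ))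
          ((range_mulVecLin_mul_le _ _).trans ?_))
        rw [range_mulVecLin_mul]
        exact (Submodule.map_mono hDi).trans (map_mulVecLin_colSpan_pow_mul_le A (R 0))
      refine ⟨hRi', ?_⟩
      rw [hD i hi]
      exact (range_mulVecLin_add_le _ _).trans (sup_le hRi'
        ((range_mulVecLin_mul_le _ _).trans (hDi.trans (colSpan_mono i.le_succ))))
  exact colSpan_le_iff.mpr fun i hi => (key i hi).2.trans (colSpan_mono hi)

theorem colSpan_pow_mul_le_colSpan (A : Matrix (Fin n) (Fin n) ℝ)
    {C : ℕ → Matrix (Fin p) (Fin p) ℝ} (hspan : ∀ m ≤ k, colSpan n p m R = colSpan n p m D)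
    (hR : ∀ i < k, R (i + 1) = R i + A * D i * C i) (hC : ∀ i < k, IsUnit (C i).det) :
    (colSpan n p k fun i => A ^ i * R 0) ≤ colSpan n p k R := by
  have hAD : ∀ i < k, LinearMap.range (A * D i).mulVecLin ≤ colSpan n p (i + 1) R := by
    intro i hi
    have hADi : A * D i = (R (i + 1) - R i) * (C i)⁻¹ := by
      rw [hR i hi, add_sub_cancel_left, mul_nonsing_inv_cancel_right _ _ (hC i hi)]
    rw [hADi]
    exact (range_mulVecLin_mul_le _ _).trans ((range_mulVecLin_sub_le _ _).trans
      (sup_le (range_mulVecLin_le_colSpan le_rfl) (range_mulVecLin_le_colSpan i.le_succ)))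
  have key : ∀ i ≤ k, LinearMap.range (A ^ i * R 0).mulVecLin ≤ colSpan n p i R := by
    intro i
    induction i with
    | zero =>
      intro _
      simpa only [pow_zero, Matrix.one_mul] using range_mulVecLin_le_colSpan (M := R) le_rfl
    | succ i ih =>
      intro hi
      rw [pow_succ', Matrix.mul_assoc, range_mulVecLin_mul]
      refine (Submodule.map_mono (ih (Nat.le_of_succ_le hi))).trans ?_
      rw [hspan i (Nat.le_of_succ_le hi), map_mulVecLin_colSpan]
      exact colSpan_le_iff.mpr fun j hj => (hAD j (by omega)).trans (colSpan_mono (by omega))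
  exact colSpan_le_iff.mpr fun i hi => (key i hi).trans (colSpan_mono hi)

theorem colSpan_eq_and_eq_colSpan_pow_mul (A : Matrix (Fin n) (Fin n) ℝ)
    {B C : ℕ → Matrix (Fin p) (Fin p) ℝ} (h0 : D 0 = R 0)
    (hR : ∀ i < k, R (i + 1) = R i + A * D i * C i)
    (hD : ∀ i < k, D (i + 1) = R (i + 1) + D i * B i) (hC : ∀ i < k, IsUnit (C i).det) :
    colSpan n p k R = colSpan n p k D ∧
      colSpan n p k D = colSpan n p k fun i => A ^ i * R 0 := by
  have hspan : ∀ m ≤ k, colSpan n p m R = colSpan n p m D := fun m hm =>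
    colSpan_eq_of_succ_eq_add_mul h0 fun i hi => hD i (hi.trans_le hm)
  refine ⟨hspan k le_rfl, le_antisymm (colSpan_le_colSpan_pow_mul A h0 hR hD) ?_⟩
  rw [← hspan k le_rfl]
  exact colSpan_pow_mul_le_colSpan A hspan hR hC

end BlockRecurrence

section cCG

variable {l o K : Type*} [CommRing K] [Fintype l] [Fintype o]

theorem cCG_step_residual_orthogonal [DecidableEq o] {A : Matrix l l K} (hA : A.IsSymm)
    {D : Matrix l o K} (hG : IsUnit (Dᵀ * A * D).det) (R : Matrix l o K) :
    Dᵀ * (R + A * D * (-(Rᵀ * D * (Dᵀ * A * D)⁻¹))ᵀ) = 0 := by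
  rw [transpose_neg, transpose_mul_mul_nonsing_inv_of_isSymm hA, Matrix.mul_neg,
    ← sub_eq_add_neg]
  have := mul_sub_mul_nonsing_inv_mul_eq_zero (M := Dᵀ) (N := A * D)
    (by rwa [← Matrix.mul_assoc]) R
  rwa [← Matrix.mul_assoc Dᵀ A D] at this

theorem cCG_step_direction_conjugate [DecidableEq o] {A : Matrix l l K} (hA : A.IsSymm)
    {D : Matrix l o K} (hG : IsUnit (Dᵀ * A * D).det) (R : Matrix l o K) :
    Dᵀ * A * (R + D * (-(Rᵀ * A * D * (Dᵀ * A * D)⁻¹))ᵀ) = 0 := by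
  have hRA : Rᵀ * A = (A * R)ᵀ := by rw [transpose_mul, hA.eq]
  rw [hRA, transpose_neg, transpose_mul_mul_nonsing_inv_of_isSymm hA, Matrix.mul_neg,
    ← sub_eq_add_neg, ← Matrix.mul_assoc Dᵀ A R]
  exact mul_sub_mul_nonsing_inv_mul_eq_zero hG R

variable {k : ℕ} {R D : ℕ → Matrix l o K} {B : ℕ → Matrix o o K}

theorem cCG_ker_residual_eq_bot [DecidableEq o] {A : Matrix l l K} (h0 : D 0 = R 0)
    (hD : ∀ i < k, D (i + 1) = R (i + 1) + D i * B i)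
    (hG : ∀ i < k, IsUnit ((D i)ᵀ * A * D i).det)
    (hconj : ∀ i < k, (D i)ᵀ * A * D (i + 1) = 0)
    (hDker : ∀ i ≤ k, LinearMap.ker (D i).mulVecLin = ⊥) :
    ∀ i ≤ k, LinearMap.ker (R i).mulVecLin = ⊥
  | 0, hi => h0 ▸ hDker 0 hi
  | i + 1, hi => ker_mulVecLin_eq_bot_of_eq_add_mul (hG i hi) (hconj i hi) (hDker (i + 1) hi)
      (hD i hi)

theorem cCG_residual_transpose_mul_direction_eq (h0 : D 0 = R 0)
    (hD : ∀ i < k, D (i + 1) = R (i + 1) + D i * B i)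
    (hgal : ∀ i < k, (D i)ᵀ * R (i + 1) = 0) :
    ∀ i ≤ k, (R i)ᵀ * D i = (R i)ᵀ * R i
  | 0, _ => by rw [h0]
  | i + 1, hi => by
    rw [hD i hi, Matrix.mul_add, ← Matrix.mul_assoc, ← transpose_transpose (D i),
      ← transpose_mul, hgal i hi, transpose_zero, Matrix.zero_mul, add_zero]

end cCG

theorem cCG_spans_coincide_general
    (n p : ℕ)
    (A : Matrix (Fin n) (Fin n) ℝ) (hA : A.PosDef)
    (b : Fin n → ℝ) (k : ℕ)
    (X R D : ℕ → Matrix (Fin n) (Fin p) ℝ)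
    (α β : ℕ → Matrix (Fin p) (Fin p) ℝ)
    (hR : ∀ i, R i = A * X i - Matrix.vecMulVec b 1)
    (hD0 : D 0 = R 0)
    (hinv : ∀ i ≤ k, IsUnit ((D i)ᵀ * A * D i).det)
    (hrank : ∀ i ≤ k, (D i).rank = p)
    (hα : ∀ i ≤ k, α i = -((R i)ᵀ * D i * ((D i)ᵀ * A * D i)⁻¹))
    (hX : ∀ i ≤ k, X (i + 1) = X i + D i * (α i)ᵀ)
    (hβ : ∀ i ≤ k, β i = -((R (i + 1))ᵀ * A * D i * ((D i)ᵀ * A * D i)⁻¹))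
    (hDs : ∀ i ≤ k, D (i + 1) = R (i + 1) + D i * (β i)ᵀ)
    :
    colSpan n p k R = colSpan n p k D ∧
      colSpan n p k D = colSpan n p k (fun i => A ^ i * R 0) := by
  have hAs : A.IsSymm := isHermitian_iff_isSymm.mp hA.isHermitian
  have hDs' : ∀ i < k, D (i + 1) = R (i + 1) + D i * (β i)ᵀ := fun i hi => hDs i hi.le
  have hres : ∀ i < k, R (i + 1) = R i + A * D i * (α i)ᵀ := fun i hi => by
    rw [hR, hX i hi.le, hR, Matrix.mul_add, Matrix.mul_assoc]
    abel
  have hgal : ∀ i < k, (D i)ᵀ * R (i + 1) = 0 := fun i hi => by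
    rw [hres i hi, hα i hi.le]
    exact cCG_step_residual_orthogonal hAs (hinv i hi.le) (R i)
  have hconj : ∀ i < k, (D i)ᵀ * A * D (i + 1) = 0 := fun i hi => by
    rw [hDs' i hi, hβ i hi.le]
    exact cCG_step_direction_conjugate hAs (hinv i hi.le) (R (i + 1))
  have hRker := cCG_ker_residual_eq_bot hD0 hDs' (fun i hi => hinv i hi.le) hconj fun i hi =>
    ker_mulVecLin_eq_bot_of_rank_eq ((hrank i hi).trans (Fintype.card_fin p).symm)
  have hαunit : ∀ i < k, IsUnit (α i)ᵀ.det := fun i hi => by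
    rw [det_transpose, hα i hi.le,
      cCG_residual_transpose_mul_direction_eq hD0 hDs' hgal i hi.le]
    exact isUnit_det_neg_transpose_mul_self_mul_nonsing_inv (hRker i hi.le) (hinv i hi.le)
  exact colSpan_eq_and_eq_colSpan_pow_mul A hD0 hres hDs' hαunit

/-- If `D_iᵀAD_i` is invertible and `rank D_i = p` for all `0 ≤ i ≤ k`
in the cCG iteration, then the three subspaces `span[R_i]₀^k`, `span[D_i]₀^k` and
`span[AⁱR₀]₀^k` of `ℝⁿ` coincide. -/
theorem cCG_spans_coincide
    (n p : ℕ) (hn : 0 < n) (hp : 0 < p) (hpn : p ≤ n)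
    (A : Matrix (Fin n) (Fin n) ℝ) (hA : A.PosDef)
    (b : Fin n → ℝ) (k : ℕ)
    (X R D : ℕ → Matrix (Fin n) (Fin p) ℝ)
    (α β : ℕ → Matrix (Fin p) (Fin p) ℝ)
    (hR : ∀ i, R i = A * X i - Matrix.vecMulVec b 1)
    (hD0 : D 0 = R 0)
    (hinv : ∀ i ≤ k, IsUnit ((D i)ᵀ * A * D i).det)
    (hrank : ∀ i ≤ k, (D i).rank = p)
    (hα : ∀ i ≤ k, α i = -((R i)ᵀ * D i * ((D i)ᵀ * A * D i)⁻¹))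
    (hX : ∀ i ≤ k, X (i + 1) = X i + D i * (α i)ᵀ)
    (hβ : ∀ i ≤ k, β i = -((R (i + 1))ᵀ * A * D i * ((D i)ᵀ * A * D i)⁻¹))
    (hDs : ∀ i ≤ k, D (i + 1) = R (i + 1) + D i * (β i)ᵀ)
    :
    colSpan n p k R = colSpan n p k D ∧
      colSpan n p k D = colSpan n p k (fun i => A ^ i * R 0) :=
  cCG_spans_coincide_general n p A hA b k X R D α β hR hD0 hinv hrank hα hX hβ hDs
end

section
/- Suppose D_iᵀAD_i is invertible and rank D_i = p for all 0 ≤ i ≤ k in the cCG iteration. Then the subspace span[D_i]₀^k of ℝⁿ has dimension exactly (k+1)p. -/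
open Matrix

/-- If a square real matrix has invertible determinant and kills a vector, the vector is zero. -/
lemma mulVec_eq_zero_of_isUnit_det {m : ℕ} {M : Matrix (Fin m) (Fin m) ℝ}
    (h : IsUnit M.det) {c : Fin m → ℝ} (hc : M *ᵥ c = 0) : c = 0 := by
  by_contra hne
  have : M.det = 0 := Matrix.exists_mulVec_eq_zero_iff.mp ⟨c, hne, hc⟩
  rw [this] at h
  exact (isUnit_iff_ne_zero.mp h) rfl

/-- Gram-matrix kernel lemma over ℝ. -/
lemma gram_mulVec_eq_zero {n p : ℕ} {M : Matrix (Fin n) (Fin p) ℝ} {c : Fin p → ℝ}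
    (h : (Mᵀ * M) *ᵥ c = 0) : M *ᵥ c = 0 := by
  have h0 : c ⬝ᵥ ((Mᵀ * M) *ᵥ c) = 0 := by rw [h, dotProduct_zero]
  rw [← Matrix.mulVec_mulVec, Matrix.dotProduct_mulVec, Matrix.vecMul_transpose] at h0
  exact dotProduct_self_eq_zero.mp h0

/-- Cancellation of an inner `P * (A * Q)` against its inverse, in right-associated form. -/
lemma cancel3 {a b c d : ℕ} (P : Matrix (Fin a) (Fin b) ℝ) (A : Matrix (Fin b) (Fin c) ℝ)
    (Q : Matrix (Fin c) (Fin a) ℝ) (N : Matrix (Fin a) (Fin d) ℝ)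
    (h : IsUnit (P * (A * Q)).det) :
    P * (A * (Q * ((P * (A * Q))⁻¹ * N))) = N := by
  have e : P * (A * (Q * ((P * (A * Q))⁻¹ * N))) = (P * (A * Q)) * ((P * (A * Q))⁻¹ * N) := by
    simp only [Matrix.mul_assoc]
  rw [e, ← Matrix.mul_assoc, Matrix.mul_nonsing_inv _ h, Matrix.one_mul]

/-- If `D_iᵀAD_i` is invertible and `rank D_i = p` for all `0 ≤ i ≤ k`
in the cCG iteration, then `span[D_i]₀^k` has dimension exactly `(k+1)p`. -/
theorem cCG_span_dimension
    (n p : ℕ) (hn : 0 < n) (hp : 0 < p) (hpn : p ≤ n)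
    (A : Matrix (Fin n) (Fin n) ℝ) (hA : A.PosDef)
    (b : Fin n → ℝ) (k : ℕ)
    (X R D : ℕ → Matrix (Fin n) (Fin p) ℝ)
    (α β : ℕ → Matrix (Fin p) (Fin p) ℝ)
    (hR : ∀ i, R i = A * X i - Matrix.vecMulVec b 1)
    (hD0 : D 0 = R 0)
    (hinv : ∀ i ≤ k, IsUnit ((D i)ᵀ * A * D i).det)
    (hrank : ∀ i ≤ k, (D i).rank = p)
    (hα : ∀ i ≤ k, α i = -((R i)ᵀ * D i * ((D i)ᵀ * A * D i)⁻¹))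
    (hX : ∀ i ≤ k, X (i + 1) = X i + D i * (α i)ᵀ)
    (hβ : ∀ i ≤ k, β i = -((R (i + 1))ᵀ * A * D i * ((D i)ᵀ * A * D i)⁻¹))
    (hDs : ∀ i ≤ k, D (i + 1) = R (i + 1) + D i * (β i)ᵀ)
    :
    Module.finrank ℝ (colSpan n p k D) = (k + 1) * p := by
  have hAT : Aᵀ = A := by
    have := hA.isHermitian
    rwa [Matrix.IsHermitian, Matrix.conjTranspose_eq_transpose_of_trivial] at this
  simp only [Matrix.mul_assoc] at hinv hα hβ
  have hGsym : ∀ i, ((D i)ᵀ * (A * D i))ᵀ = (D i)ᵀ * (A * D i) := by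
    intro i
    simp only [Matrix.transpose_mul, Matrix.transpose_transpose, hAT, Matrix.mul_assoc]
  have hGinvT : ∀ i, (((D i)ᵀ * (A * D i))⁻¹)ᵀ = ((D i)ᵀ * (A * D i))⁻¹ := by
    intro i
    rw [Matrix.transpose_nonsing_inv, hGsym]
  have hRrec : ∀ i ≤ k, R (i + 1) = R i + A * (D i * (α i)ᵀ) := by
    intro i hi
    rw [hR (i + 1), hX i hi, hR i, Matrix.mul_add]
    abel
  have hαT : ∀ i ≤ k, (α i)ᵀ = -(((D i)ᵀ * (A * D i))⁻¹ * ((D i)ᵀ * R i)) := by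
    intro i hi
    rw [hα i hi]
    simp only [Matrix.transpose_neg, Matrix.transpose_mul, hGinvT, Matrix.transpose_transpose,
      Matrix.mul_assoc]
  have hβT : ∀ i ≤ k, (β i)ᵀ = -(((D i)ᵀ * (A * D i))⁻¹ * ((D i)ᵀ * (A * R (i + 1)))) := by
    intro i hi
    rw [hβ i hi]
    simp only [Matrix.transpose_neg, Matrix.transpose_mul, hGinvT, Matrix.transpose_transpose,
      hAT, Matrix.mul_assoc]
  have hDo : ∀ i ≤ k, (D i)ᵀ * R (i + 1) = 0 := by
    intro i hi
    rw [hRrec i hi, hαT i hi]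
    simp only [Matrix.mul_add, Matrix.mul_neg, Matrix.neg_mul, Matrix.mul_assoc]
    rw [cancel3 ((D i)ᵀ) A (D i) _ (hinv i hi)]
    abel
  have hconsec : ∀ i ≤ k, (D i)ᵀ * (A * D (i + 1)) = 0 := by
    intro i hi
    rw [hDs i hi, hβT i hi]
    simp only [Matrix.mul_add, Matrix.mul_neg, Matrix.neg_mul, Matrix.mul_assoc]
    rw [cancel3 ((D i)ᵀ) A (D i) _ (hinv i hi)]
    abel
  -- the main induction: orthogonality and conjugacy invariants
  have key : ∀ i, i ≤ k →
      (∀ j, j < i → (R i)ᵀ * D j = 0 ∧ (D j)ᵀ * (A * D i) = 0) ∧ ((R i)ᵀ * D i).det ≠ 0 := by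
    intro i
    induction i using Nat.strong_induction_on with
    | _ i IH =>
      intro hik
      match i with
      | 0 =>
        refine ⟨fun j hj => absurd hj (Nat.not_lt_zero j), ?_⟩
        rw [hD0]
        intro h0
        obtain ⟨v, hv, hv0⟩ := Matrix.exists_mulVec_eq_zero_iff.mpr h0
        have hRv : R 0 *ᵥ v = 0 := gram_mulVec_eq_zero hv0
        have hDv : D 0 *ᵥ v = 0 := by rw [hD0, hRv]
        have : v = 0 := by
          apply mulVec_eq_zero_of_isUnit_det (hinv 0 (Nat.zero_le k))
          simp only [← Matrix.mulVec_mulVec, hDv, Matrix.mulVec_zero]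
        exact hv this
      | i + 1 =>
        have hik' : i ≤ k := le_trans (Nat.le_succ i) hik
        have IHi := IH i (Nat.lt_succ_self i) hik'
        have h1 : ∀ j, j < i + 1 → (R (i + 1))ᵀ * D j = 0 := by
          intro j hj
          rcases Nat.lt_succ_iff_lt_or_eq.mp hj with hj' | rfl
          · have e2 : (D j)ᵀ * (A * D i) = 0 := (IHi.1 j hj').2
            have e3 : (D i)ᵀ * (A * D j) = 0 := by
              have := congrArg Matrix.transpose e2
              simpa [Matrix.transpose_mul, hAT, Matrix.mul_assoc] using this
            rw [hRrec i hik']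
            simp only [Matrix.transpose_add, Matrix.transpose_mul, Matrix.transpose_transpose,
              hAT, Matrix.add_mul, Matrix.mul_assoc, (IHi.1 j hj').1, e3, Matrix.mul_zero,
              add_zero]
          · have := congrArg Matrix.transpose (hDo j hik')
            simpa [Matrix.transpose_mul, Matrix.transpose_transpose] using this
        have hRR : ∀ m, m ≤ i → (R (i + 1))ᵀ * R m = 0 := by
          intro m hm
          match m with
          | 0 => rw [← hD0]; exact h1 0 (Nat.succ_pos i)
          | m + 1 =>
            have hmk : m ≤ k := by omega
            have e : R (m + 1) = D (m + 1) - D m * (β m)ᵀ := by rw [hDs m hmk]; abel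
            rw [e, Matrix.mul_sub, h1 (m + 1) (by omega), ← Matrix.mul_assoc,
              h1 m (by omega), Matrix.zero_mul, sub_zero]
        have h2 : ∀ j, j < i + 1 → (D j)ᵀ * (A * D (i + 1)) = 0 := by
          intro j hj
          rcases Nat.lt_succ_iff_lt_or_eq.mp hj with hj' | rfl
          · have hjk : j ≤ k := by omega
            have hαdet : IsUnit ((α j)ᵀ).det := by
              rw [Matrix.det_transpose, hα j hjk, ← Matrix.mul_assoc, Matrix.det_neg,
                Matrix.det_mul]
              exact ((isUnit_one.neg.pow _)).mul
                ((isUnit_iff_ne_zero.mpr (IH j (by omega) hjk).2).mul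
                  (Matrix.isUnit_nonsing_inv_det _ (hinv j hjk)))
            have key1 : (R (i + 1))ᵀ * (A * D j) * (α j)ᵀ = 0 := by
              have e : A * (D j * (α j)ᵀ) = R (j + 1) - R j := by rw [hRrec j hjk]; abel
              calc (R (i + 1))ᵀ * (A * D j) * (α j)ᵀ
                  = (R (i + 1))ᵀ * (A * (D j * (α j)ᵀ)) := by simp only [Matrix.mul_assoc]
                _ = (R (i + 1))ᵀ * (R (j + 1) - R j) := by rw [e]
                _ = 0 := by
                    rw [Matrix.mul_sub, hRR (j + 1) (by omega), hRR j (by omega), sub_zero]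
            have key2 : (R (i + 1))ᵀ * (A * D j) = 0 := by
              have h5 := congrArg (fun M => M * ((α j)ᵀ)⁻¹) key1
              simpa [Matrix.mul_assoc, Matrix.mul_nonsing_inv _ hαdet] using h5
            have e1 : (D j)ᵀ * (A * R (i + 1)) = 0 := by
              have := congrArg Matrix.transpose key2
              simpa [Matrix.transpose_mul, hAT, Matrix.mul_assoc] using this
            have e2 : (D j)ᵀ * (A * (D i * (β i)ᵀ)) = 0 := by
              calc (D j)ᵀ * (A * (D i * (β i)ᵀ)) = ((D j)ᵀ * (A * D i)) * (β i)ᵀ := by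
                    simp only [Matrix.mul_assoc]
                _ = 0 := by rw [(IHi.1 j hj').2, Matrix.zero_mul]
            rw [hDs i hik']
            simp only [Matrix.mul_add, e1, e2, add_zero]
          · exact hconsec j hik'
        have h3 : ((R (i + 1))ᵀ * D (i + 1)).det ≠ 0 := by
          have eq1 : (R (i + 1))ᵀ * D (i + 1) = (R (i + 1))ᵀ * R (i + 1) := by
            rw [hDs i hik', Matrix.mul_add, ← Matrix.mul_assoc, h1 i (Nat.lt_succ_self i),
              Matrix.zero_mul, add_zero]
          rw [eq1]
          intro h0
          obtain ⟨v, hv, hv0⟩ := Matrix.exists_mulVec_eq_zero_iff.mpr h0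
          have hRv : R (i + 1) *ᵥ v = 0 := gram_mulVec_eq_zero hv0
          have hDv : D (i + 1) *ᵥ v = D i *ᵥ ((β i)ᵀ *ᵥ v) := by
            rw [hDs i hik', Matrix.add_mulVec, hRv, Matrix.mulVec_mulVec, zero_add,
              ← Matrix.mulVec_mulVec]
          have hw : (β i)ᵀ *ᵥ v = 0 := by
            apply mulVec_eq_zero_of_isUnit_det (hinv i hik')
            have h6 : ((D i)ᵀ * (A * D (i + 1))) *ᵥ v = 0 := by
              rw [hconsec i hik', Matrix.zero_mulVec]
            simp only [← Matrix.mulVec_mulVec] at h6 ⊢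
            rw [← hDv]
            exact h6
          have hDv0 : D (i + 1) *ᵥ v = 0 := by rw [hDv, hw, Matrix.mulVec_zero]
          have : v = 0 := by
            apply mulVec_eq_zero_of_isUnit_det (hinv (i + 1) hik)
            simp only [← Matrix.mulVec_mulVec, hDv0, Matrix.mulVec_zero]
          exact hv this
        exact ⟨fun j hj => ⟨h1 j hj, h2 j hj⟩, h3⟩
  -- full pairwise conjugacy
  have hconj : ∀ i ≤ k, ∀ j ≤ k, i ≠ j → (D i)ᵀ * (A * D j) = 0 := by
    intro i hi j hj hij
    rcases lt_or_gt_of_ne hij with h | h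
    · exact ((key j hj).1 i h).2
    · have h4 := ((key i hi).1 j h).2
      have := congrArg Matrix.transpose h4
      simpa [Matrix.transpose_mul, hAT, Matrix.mul_assoc] using this
  -- the dimension computation
  set v : Fin (k + 1) × Fin p → (Fin n → ℝ) := fun q r => D q.1 r q.2 with hv
  have hset : {x : Fin n → ℝ | ∃ i ≤ k, ∃ j : Fin p, x = fun r => D i r j} = Set.range v := by
    ext x
    constructor
    · rintro ⟨i, hi, j, rfl⟩
      exact ⟨(⟨i, by omega⟩, j), rfl⟩
    · rintro ⟨⟨i, j⟩, rfl⟩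
      exact ⟨i, Nat.lt_succ_iff.mp i.isLt, j, rfl⟩
  have hli : LinearIndependent ℝ v := by
    rw [Fintype.linearIndependent_iff]
    intro g hg q
    set c : Fin (k + 1) → Fin p → ℝ := fun i j => g (i, j) with hc
    have hsum : ∑ i : Fin (k + 1), D (i : ℕ) *ᵥ c i = 0 := by
      rw [← hg, Fintype.sum_prod_type]
      refine Finset.sum_congr rfl fun i _ => ?_
      ext r
      simp [Matrix.mulVec, dotProduct, c, v, mul_comm, Finset.sum_apply]
    have hzero : ∀ i0 : Fin (k + 1), c i0 = 0 := by
      intro i0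
      have hk0 : (i0 : ℕ) ≤ k := Nat.lt_succ_iff.mp i0.isLt
      apply mulVec_eq_zero_of_isUnit_det (hinv (i0 : ℕ) hk0)
      have h0 : ((D (i0 : ℕ))ᵀ * A).mulVecLin (∑ i : Fin (k + 1), D (i : ℕ) *ᵥ c i) = 0 := by
        rw [hsum, map_zero]
      rw [map_sum] at h0
      have h1 : ∀ i : Fin (k + 1), i ≠ i0 →
          ((D (i0 : ℕ))ᵀ * A).mulVecLin (D (i : ℕ) *ᵥ c i) = 0 := by
        intro i hi
        have hik : (i : ℕ) ≤ k := Nat.lt_succ_iff.mp i.isLt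
        have : (D (i0 : ℕ))ᵀ * (A * D (i : ℕ)) = 0 :=
          hconj _ hk0 _ hik (fun h => hi (Fin.ext (by omega)).symm)
        rw [Matrix.mulVecLin_apply, Matrix.mulVec_mulVec, Matrix.mul_assoc, this,
          Matrix.zero_mulVec]
      rw [Finset.sum_eq_single i0 (fun i _ hi => h1 i hi) (by simp)] at h0
      rw [Matrix.mulVecLin_apply, Matrix.mulVec_mulVec, Matrix.mul_assoc] at h0
      exact h0
    have := congrFun (hzero q.1) q.2
    simpa [c] using this
  have hspan : colSpan n p k D = Submodule.span ℝ (Set.range v) := by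
    rw [colSpan, hset]
  rw [hspan, finrank_span_eq_card hli, Fintype.card_prod, Fintype.card_fin, Fintype.card_fin]
end

section
/- Suppose D_iᵀAD_i is invertible and rank D_i = p for all 0 ≤ i ≤ k in the cCG iteration. Then for every vector e_j of the canonical basis of ℝᵖ, the vector X_{k+1}e_j ∈ ℝⁿ (the j-th column of X_{k+1}) is the minimizer of f over the affine subspace X₀e_j + span[D_i]₀^k: for every v ∈ span[D_i]₀^k, f(X_{k+1}e_j) ≤ f(X₀e_j + v). -/
/-!
Block orthogonality drives the proof. By induction on `m`, the residual `R m` is orthogonal to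
all earlier directions (`(R m)ᵀ * D i = 0`) and the directions are mutually `A`-conjugate
(`(D m)ᵀ * A * D i = 0`). The only non-local step is `(R m)ᵀ * A * D i = 0` for `i + 1 < m`:
since `A * D i * (α i)ᵀ = R (i + 1) - R i` and the residuals are orthogonal to each other, it
needs `α i` to be invertible, which holds because `(R i)ᵀ * D i = (R i)ᵀ * R i` has trivial
kernel. So the `j`-th residual column `A x - b` of `X (k + 1)` is orthogonal to the span of the
directions, and for `w` in that span `f (x + w) = f x + ½ wᵀ A w ≥ f x`.
-/

open Matrix

theorem quadratic_le_add_of_dotProduct_eq_zero {ι : Type*} [Fintype ι] {A : Matrix ι ι ℝ}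
    (hA : A.PosSemidef) (b x w : ι → ℝ) (hw : (A *ᵥ x - b) ⬝ᵥ w = 0) :
    1 / 2 * (x ⬝ᵥ A *ᵥ x) - b ⬝ᵥ x ≤ 1 / 2 * ((x + w) ⬝ᵥ A *ᵥ (x + w)) - b ⬝ᵥ (x + w) := by
  have hsymm : x ⬝ᵥ A *ᵥ w = w ⬝ᵥ A *ᵥ x := by
    rw [dotProduct_mulVec, ← mulVec_transpose,
      (isHermitian_iff_isSymm.mp hA.isHermitian).eq, dotProduct_comm]
  have hnonneg : 0 ≤ w ⬝ᵥ A *ᵥ w := by simpa using hA.dotProduct_mulVec_nonneg w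
  rw [sub_dotProduct, dotProduct_comm] at hw
  simp only [mulVec_add, dotProduct_add, add_dotProduct]
  linarith

/-- The first `k + 1` steps of the cooperative conjugate gradient iteration. -/
structure IsCCGIteration {ι κ : Type*} [Fintype ι] [Fintype κ] [DecidableEq κ]
    (A : Matrix ι ι ℝ) (b : ι → ℝ) (k : ℕ) (X R D : ℕ → Matrix ι κ ℝ)
    (α β : ℕ → Matrix κ κ ℝ) : Prop where
  residual_eq : ∀ i, R i = A * X i - vecMulVec b 1
  dir_zero : D 0 = R 0
  isUnit_det_gram : ∀ i ≤ k, IsUnit ((D i)ᵀ * A * D i).det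
  alpha_eq : ∀ i ≤ k, α i = -((R i)ᵀ * D i * ((D i)ᵀ * A * D i)⁻¹)
  X_succ : ∀ i ≤ k, X (i + 1) = X i + D i * (α i)ᵀ
  beta_eq : ∀ i ≤ k, β i = -((R (i + 1))ᵀ * A * D i * ((D i)ᵀ * A * D i)⁻¹)
  dir_succ : ∀ i ≤ k, D (i + 1) = R (i + 1) + D i * (β i)ᵀ

namespace IsCCGIteration

section General

variable {ι κ : Type*} [Fintype ι] [Fintype κ] [DecidableEq κ]
  {A : Matrix ι ι ℝ} {b : ι → ℝ} {k : ℕ} {X R D : ℕ → Matrix ι κ ℝ} {α β : ℕ → Matrix κ κ ℝ}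
  {i : ℕ}

theorem residual_succ (h : IsCCGIteration A b k X R D α β) (hi : i ≤ k) :
    R (i + 1) = R i + A * D i * (α i)ᵀ := by
  rw [h.residual_eq, h.residual_eq, h.X_succ i hi, Matrix.mul_add, Matrix.mul_assoc]
  abel

theorem alpha_mul_gram (h : IsCCGIteration A b k X R D α β) (hi : i ≤ k) :
    α i * ((D i)ᵀ * A * D i) = -((R i)ᵀ * D i) := by
  rw [h.alpha_eq i hi, Matrix.neg_mul, nonsing_inv_mul_cancel_right _ _ (h.isUnit_det_gram i hi)]

theorem beta_mul_gram (h : IsCCGIteration A b k X R D α β) (hi : i ≤ k) :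
    β i * ((D i)ᵀ * A * D i) = -((R (i + 1))ᵀ * A * D i) := by
  rw [h.beta_eq i hi, Matrix.neg_mul, nonsing_inv_mul_cancel_right _ _ (h.isUnit_det_gram i hi)]

theorem transpose_residual_succ_mul (h : IsCCGIteration A b k X R D α β) (hA : Aᵀ = A)
    (hi : i ≤ k) (l : ℕ) :
    (R (i + 1))ᵀ * D l = (R i)ᵀ * D l + α i * ((D i)ᵀ * A * D l) := by
  rw [h.residual_succ hi, transpose_add, Matrix.add_mul, transpose_mul, transpose_mul,
    transpose_transpose, hA]
  simp only [Matrix.mul_assoc]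

theorem transpose_dir_succ_mul_mul (h : IsCCGIteration A b k X R D α β) (hi : i ≤ k) (l : ℕ) :
    (D (i + 1))ᵀ * A * D l = (R (i + 1))ᵀ * A * D l + β i * ((D i)ᵀ * A * D l) := by
  rw [h.dir_succ i hi, transpose_add, Matrix.add_mul, Matrix.add_mul, transpose_mul,
    transpose_transpose]
  simp only [Matrix.mul_assoc]

theorem transpose_residual_succ_mul_dir (h : IsCCGIteration A b k X R D α β) (hA : Aᵀ = A)
    (hi : i ≤ k) : (R (i + 1))ᵀ * D i = 0 := by
  rw [h.transpose_residual_succ_mul hA hi, h.alpha_mul_gram hi, add_neg_cancel]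

theorem transpose_dir_succ_mul_mul_dir (h : IsCCGIteration A b k X R D α β) (hi : i ≤ k) :
    (D (i + 1))ᵀ * A * D i = 0 := by
  rw [h.transpose_dir_succ_mul_mul hi, h.beta_mul_gram hi, add_neg_cancel]

theorem transpose_residual_mul_dir (h : IsCCGIteration A b k X R D α β) (hA : Aᵀ = A)
    (hi : i ≤ k) : (R i)ᵀ * D i = (R i)ᵀ * R i := by
  cases i with
  | zero => rw [h.dir_zero]
  | succ j =>
    rw [h.dir_succ j (by omega), Matrix.mul_add, ← Matrix.mul_assoc,
      h.transpose_residual_succ_mul_dir hA (by omega), Matrix.zero_mul, add_zero]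

theorem gram_mulVec_eq_zero (h : IsCCGIteration A b k X R D α β) (hi : i ≤ k) {z : κ → ℝ}
    (hz : R i *ᵥ z = 0) : ((D i)ᵀ * A * D i) *ᵥ z = 0 := by
  cases i with
  | zero => rw [← mulVec_mulVec, h.dir_zero, hz, mulVec_zero]
  | succ j =>
    have hDz : D (j + 1) *ᵥ z = D j *ᵥ ((β j)ᵀ *ᵥ z) := by
      rw [h.dir_succ j (by omega), add_mulVec, hz, zero_add, mulVec_mulVec]
    rw [← mulVec_mulVec, hDz, mulVec_mulVec, h.transpose_dir_succ_mul_mul_dir (by omega),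
      zero_mulVec]

theorem isUnit_det_transpose_residual_mul_dir (h : IsCCGIteration A b k X R D α β)
    (hA : Aᵀ = A) (hi : i ≤ k) : IsUnit ((R i)ᵀ * D i).det := by
  rw [isUnit_iff_ne_zero, Ne, ← exists_mulVec_eq_zero_iff]
  rintro ⟨z, hz0, hz⟩
  rw [h.transpose_residual_mul_dir hA hi] at hz
  have hRz : R i *ᵥ z = 0 := by
    simpa using (SetLike.ext_iff.mp (ker_mulVecLin_transpose_mul_self (R i)) z).mp hz
  exact (h.isUnit_det_gram i hi).ne_zero
    (exists_mulVec_eq_zero_iff.mp ⟨z, hz0, h.gram_mulVec_eq_zero hi hRz⟩)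

theorem isUnit_det_alpha (h : IsCCGIteration A b k X R D α β) (hA : Aᵀ = A) (hi : i ≤ k) :
    IsUnit (α i).det := by
  rw [h.alpha_eq i hi, det_neg, det_mul]
  exact (isUnit_neg_one.pow _).mul ((h.isUnit_det_transpose_residual_mul_dir hA hi).mul
    (isUnit_nonsing_inv_det _ (h.isUnit_det_gram i hi)))

theorem mul_residual_eq_zero (h : IsCCGIteration A b k X R D α β) {l : Type*} [Fintype l]
    {M : Matrix l ι ℝ} {j : ℕ} (hj : j ≤ k + 1) (hM : ∀ i ≤ j, M * D i = 0) :
    M * R j = 0 := by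
  cases j with
  | zero => rw [← h.dir_zero]; exact hM 0 le_rfl
  | succ j =>
    have hRD : R (j + 1) = D (j + 1) - D j * (β j)ᵀ := by
      rw [h.dir_succ j (by omega)]; abel
    rw [hRD, Matrix.mul_sub, ← Matrix.mul_assoc, hM (j + 1) le_rfl, hM j (by omega),
      Matrix.zero_mul, sub_zero]

theorem mul_mul_dir_eq_zero (h : IsCCGIteration A b k X R D α β) (hA : Aᵀ = A)
    {l : Type*} [Fintype l] {M : Matrix l ι ℝ} (hi : i ≤ k) (h₀ : M * R i = 0)
    (h₁ : M * R (i + 1) = 0) : M * A * D i = 0 := by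
  have hα : M * A * D i * (α i)ᵀ = 0 := by
    calc M * A * D i * (α i)ᵀ = M * (R (i + 1) - R i) := by
          rw [h.residual_succ hi, add_sub_cancel_left]; simp only [Matrix.mul_assoc]
      _ = 0 := by rw [Matrix.mul_sub, h₀, h₁, sub_zero]
  have hαT : IsUnit (α i)ᵀ.det := by
    rw [det_transpose]; exact h.isUnit_det_alpha hA hi
  simpa [Matrix.mul_nonsing_inv_cancel_right _ _ hαT] using congrArg (· * ((α i)ᵀ)⁻¹) hα

theorem orthogonal_and_conjugate (h : IsCCGIteration A b k X R D α β) (hA : Aᵀ = A) {m : ℕ}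
    (hm : m ≤ k + 1) :
    (∀ i < m, (R m)ᵀ * D i = 0) ∧ (m ≤ k → ∀ i < m, (D m)ᵀ * A * D i = 0) := by
  induction m with
  | zero => simp
  | succ m ih =>
    have hmk : m ≤ k := by omega
    obtain ⟨ihR, ihD⟩ := ih (by omega)
    have hR : ∀ i < m + 1, (R (m + 1))ᵀ * D i = 0 := by
      intro i hi
      rcases Nat.lt_succ_iff_lt_or_eq.mp hi with hi | rfl
      · rw [h.transpose_residual_succ_mul hA hmk, ihR i hi, ihD hmk i hi, Matrix.mul_zero,
          add_zero]
      · exact h.transpose_residual_succ_mul_dir hA hmk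
    refine ⟨hR, fun _ i hi => ?_⟩
    rcases Nat.lt_succ_iff_lt_or_eq.mp hi with hi | rfl
    · have hRR : ∀ j ≤ m, (R (m + 1))ᵀ * R j = 0 := fun j hj =>
        h.mul_residual_eq_zero (by omega) fun l hl => hR l (by omega)
      rw [h.transpose_dir_succ_mul_mul hmk,
        h.mul_mul_dir_eq_zero hA (by omega) (hRR i (by omega)) (hRR (i + 1) hi),
        ihD hmk i hi, Matrix.mul_zero, add_zero]
    · exact h.transpose_dir_succ_mul_mul_dir hmk

end General

end IsCCGIteration

theorem mulVec_mem_colSpan {n p k i : ℕ} {M : ℕ → Matrix (Fin n) (Fin p) ℝ} (hi : i ≤ k)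
    (w : Fin p → ℝ) : M i *ᵥ w ∈ colSpan n p k M := by
  have hw : M i *ᵥ w ∈ LinearMap.range (M i).mulVecLin := ⟨w, rfl⟩
  rw [range_mulVecLin] at hw
  refine Submodule.span_mono ?_ hw
  rintro _ ⟨j, rfl⟩
  exact ⟨i, hi, j, rfl⟩

theorem dotProduct_eq_zero_of_mem_colSpan {n p k : ℕ} {M : ℕ → Matrix (Fin n) (Fin p) ℝ}
    {c : Fin n → ℝ} (hc : ∀ i ≤ k, ∀ j, c ⬝ᵥ (M i).col j = 0) {u : Fin n → ℝ}
    (hu : u ∈ colSpan n p k M) : c ⬝ᵥ u = 0 := by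
  refine (Submodule.span_le (p := LinearMap.ker (dotProductBilin ℝ ℝ c))).mpr ?_ hu
  rintro _ ⟨i, hi, j, rfl⟩
  exact hc i hi j

namespace IsCCGIteration

variable {n p k : ℕ} {A : Matrix (Fin n) (Fin n) ℝ} {b : Fin n → ℝ}
  {X R D : ℕ → Matrix (Fin n) (Fin p) ℝ} {α β : ℕ → Matrix (Fin p) (Fin p) ℝ}

theorem col_residual (h : IsCCGIteration A b k X R D α β) (m : ℕ) (j : Fin p) :
    (R m).col j = A *ᵥ (X m).col j - b := by
  ext r
  simp [h.residual_eq, mul_apply, mulVec, dotProduct]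

theorem col_sub_col_zero_mem_colSpan (h : IsCCGIteration A b k X R D α β) (j : Fin p) {m : ℕ}
    (hm : m ≤ k + 1) : (X m).col j - (X 0).col j ∈ colSpan n p k D := by
  induction m with
  | zero => simp
  | succ m ih =>
    have hstep : (X (m + 1)).col j = (X m).col j + D m *ᵥ α m j := by
      ext r
      simp [h.X_succ m (by omega), mul_apply, mulVec, dotProduct]
    rw [hstep, add_sub_right_comm]
    exact add_mem (ih (by omega)) (mulVec_mem_colSpan (by omega) _)

theorem col_residual_dotProduct_eq_zero (h : IsCCGIteration A b k X R D α β) (hA : Aᵀ = A)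
    (j : Fin p) {u : Fin n → ℝ} (hu : u ∈ colSpan n p k D) : (R (k + 1)).col j ⬝ᵥ u = 0 := by
  refine dotProduct_eq_zero_of_mem_colSpan (fun i hi j' => ?_) hu
  have hij := congrFun₂ ((h.orthogonal_and_conjugate hA le_rfl).1 i (by omega)) j j'
  rwa [mul_apply'] at hij

end IsCCGIteration

theorem cCG_columns_minimize_general
    (n p : ℕ)
    (A : Matrix (Fin n) (Fin n) ℝ) (hA : A.PosDef)
    (b : Fin n → ℝ) (k : ℕ)
    (X R D : ℕ → Matrix (Fin n) (Fin p) ℝ)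
    (α β : ℕ → Matrix (Fin p) (Fin p) ℝ)
    (hR : ∀ i, R i = A * X i - Matrix.vecMulVec b 1)
    (hD0 : D 0 = R 0)
    (hinv : ∀ i ≤ k, IsUnit ((D i)ᵀ * A * D i).det)
    (hα : ∀ i ≤ k, α i = -((R i)ᵀ * D i * ((D i)ᵀ * A * D i)⁻¹))
    (hX : ∀ i ≤ k, X (i + 1) = X i + D i * (α i)ᵀ)
    (hβ : ∀ i ≤ k, β i = -((R (i + 1))ᵀ * A * D i * ((D i)ᵀ * A * D i)⁻¹))
    (hDs : ∀ i ≤ k, D (i + 1) = R (i + 1) + D i * (β i)ᵀ)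
    (f : (Fin n → ℝ) → ℝ)
    (hf : ∀ y, f y = (1 / 2) * (y ⬝ᵥ A *ᵥ y) - b ⬝ᵥ y)
    :
    ∀ j : Fin p, ∀ v ∈ colSpan n p k D,
      f (fun r => X (k + 1) r j) ≤ f ((fun r => X 0 r j) + v) := by
  intro j v hv
  have hsymm : Aᵀ = A := (isHermitian_iff_isSymm.mp hA.isHermitian).eq
  have hcg : IsCCGIteration A b k X R D α β := ⟨hR, hD0, hinv, hα, hX, hβ, hDs⟩
  have hstep : v - ((X (k + 1)).col j - (X 0).col j) ∈ colSpan n p k D :=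
    sub_mem hv (hcg.col_sub_col_zero_mem_colSpan j le_rfl)
  have hshift :
      (X 0).col j + v = (X (k + 1)).col j + (v - ((X (k + 1)).col j - (X 0).col j)) := by
    abel
  change f ((X (k + 1)).col j) ≤ f ((X 0).col j + v)
  rw [hshift, hf, hf]
  refine quadratic_le_add_of_dotProduct_eq_zero hA.posSemidef _ _ _ ?_
  rw [← hcg.col_residual]
  exact hcg.col_residual_dotProduct_eq_zero hsymm j hstep

/-- If `D_iᵀAD_i` is invertible and `rank D_i = p` for all `0 ≤ i ≤ k`
in the cCG iteration, then for every canonical basis vector `e_j` of `ℝᵖ`, the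
`j`-th column `X_{k+1}e_j` of `X_{k+1}` minimizes `f` over the affine subspace
`X₀e_j + span[D_i]₀^k`. -/
theorem cCG_columns_minimize
    (n p : ℕ) (hn : 0 < n) (hp : 0 < p) (hpn : p ≤ n)
    (A : Matrix (Fin n) (Fin n) ℝ) (hA : A.PosDef)
    (b : Fin n → ℝ) (k : ℕ)
    (X R D : ℕ → Matrix (Fin n) (Fin p) ℝ)
    (α β : ℕ → Matrix (Fin p) (Fin p) ℝ)
    (hR : ∀ i, R i = A * X i - Matrix.vecMulVec b 1)
    (hD0 : D 0 = R 0)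
    (hinv : ∀ i ≤ k, IsUnit ((D i)ᵀ * A * D i).det)
    (hrank : ∀ i ≤ k, (D i).rank = p)
    (hα : ∀ i ≤ k, α i = -((R i)ᵀ * D i * ((D i)ᵀ * A * D i)⁻¹))
    (hX : ∀ i ≤ k, X (i + 1) = X i + D i * (α i)ᵀ)
    (hβ : ∀ i ≤ k, β i = -((R (i + 1))ᵀ * A * D i * ((D i)ᵀ * A * D i)⁻¹))
    (hDs : ∀ i ≤ k, D (i + 1) = R (i + 1) + D i * (β i)ᵀ)
    (f : (Fin n → ℝ) → ℝ)
    (hf : ∀ y, f y = (1 / 2) * (y ⬝ᵥ A *ᵥ y) - b ⬝ᵥ y)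
    :
    ∀ j : Fin p, ∀ v ∈ colSpan n p k D,
      f (fun r => X (k + 1) r j) ≤ f ((fun r => X 0 r j) + v) :=
  cCG_columns_minimize_general n p A hA b k X R D α β hR hD0 hinv hα hX hβ hDs f hf
end

section
/- Suppose D_iᵀAD_i is invertible and rank D_i = p for all 0 ≤ i ≤ k in the cCG iteration, and suppose moreover rank R_{k+1} = p. Then for every nonzero vector v ∈ ℝᵖ, the vector R_{k+1}v does not belong to the subspace span[D_i]₀^k. -/
open Matrix

/-!
As for classical CG, one proves by induction on `j ≤ k` that the residual `R_{j+1}` is orthogonal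
to all earlier directions, `R_{j+1}ᵀ D_i = 0`, and that the directions are `A`-conjugate,
`D_{j+1}ᵀ A D_i = 0`, for `i ≤ j`. The block version needs one extra ingredient: the step
`R_{j+2}ᵀ A D_i = 0` goes through `A D_i α_iᵀ = R_{i+1} - R_i`, so `α_i` must be invertible.
It is, because `α_i = -R_iᵀ R_i (D_iᵀ A D_i)⁻¹` and `R_i` is injective: if `R_{i+1} v = 0` then
`D_{i+1} v = D_i β_iᵀ v` is `A`-conjugate to itself, hence zero.
Finally, if `R_{k+1} v` lies in the span of the `D_i`, then `R_{k+1}ᵀ R_{k+1} v = 0`, so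
`R_{k+1} v = 0` and `v = 0` because `R_{k+1}` has full column rank.
-/

namespace Matrix

variable {ι κ κ' : Type*} [Fintype κ]

theorem mulVec_injective_of_rank_eq_card {K : Type*} [Field K] {M : Matrix ι κ K}
    (h : M.rank = Fintype.card κ) : Function.Injective M.mulVec :=
  mulVec_injective_iff.2 <| linearIndependent_iff_card_eq_finrank_span.2 <| by
    rw [← h, rank_eq_finrank_span_cols]; rfl

theorem PosDef.mulVec_eq_zero_of_transpose_mul_mul_eq_zero [Fintype ι] [Fintype κ']
    {A : Matrix ι ι ℝ} (hA : A.PosDef) {M : Matrix ι κ ℝ} {N : Matrix ι κ' ℝ}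
    (hMN : Mᵀ * A * N = 0) {u : κ → ℝ} {w : κ' → ℝ}
    (h : M *ᵥ u = N *ᵥ w) : M *ᵥ u = 0 := by
  by_contra hne
  have hpos := hA.dotProduct_mulVec_pos hne
  rw [star_trivial] at hpos
  conv_rhs at hpos => arg 2; rw [h]
  rw [mulVec_mulVec, dotProduct_mulVec, ← vecMul_transpose, vecMul_vecMul, ← dotProduct_mulVec,
    ← Matrix.mul_assoc, hMN, zero_mulVec, dotProduct_zero] at hpos
  exact hpos.false

theorem add_neg_mul_nonsing_inv_mul_cancel {m K : Type*} [DecidableEq κ] [CommRing K]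
    (M : Matrix m κ K) {G : Matrix κ κ K} (hG : IsUnit G.det) : M + -(M * G⁻¹) * G = 0 := by
  rw [Matrix.neg_mul, Matrix.mul_assoc, nonsing_inv_mul _ hG, Matrix.mul_one, add_neg_cancel]

end Matrix

theorem colSpan_le_ker_mulVecLin {m : Type*} {n p k : ℕ} {M : ℕ → Matrix (Fin n) (Fin p) ℝ}
    {B : Matrix m (Fin n) ℝ} (h : ∀ i ≤ k, B * M i = 0) :
    colSpan n p k M ≤ LinearMap.ker B.mulVecLin := by
  rw [colSpan, Submodule.span_le]
  rintro _ ⟨i, hi, j, rfl⟩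
  have hcol : (fun r => M i r j) = M i *ᵥ Pi.single j 1 := by
    ext r; simp [mulVec_single]
  rw [SetLike.mem_coe, LinearMap.mem_ker, mulVecLin_apply, hcol, mulVec_mulVec, h i hi,
    zero_mulVec]

theorem mulVec_notMem_colSpan {κ : Type*} [Fintype κ] {n p k : ℕ}
    {M : ℕ → Matrix (Fin n) (Fin p) ℝ} {N : Matrix (Fin n) κ ℝ}
    (hN : Function.Injective N.mulVec) (horth : ∀ i ≤ k, Nᵀ * M i = 0) {v : κ → ℝ}
    (hv : v ≠ 0) : N *ᵥ v ∉ colSpan n p k M := by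
  intro hmem
  have hker := colSpan_le_ker_mulVecLin horth hmem
  rw [LinearMap.mem_ker, mulVecLin_apply, mulVec_mulVec, ← conjTranspose_eq_transpose_of_trivial,
    conjTranspose_mul_self_mulVec_eq_zero] at hker
  exact hv (hN (hker.trans (mulVec_zero N).symm))

variable {ι κ : Type*} [Fintype ι] [Fintype κ] [DecidableEq κ]

/-- The cCG recurrences through step `k`, with `X` and `b` eliminated via
`R_{i+1} = R_i + A D_i α_iᵀ`. -/
structure IsCCG (A : Matrix ι ι ℝ) (R D : ℕ → Matrix ι κ ℝ) (α β : ℕ → Matrix κ κ ℝ)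
    (k : ℕ) : Prop where
  direction_zero : D 0 = R 0
  isUnit_det_gram : ∀ i ≤ k, IsUnit ((D i)ᵀ * A * D i).det
  coeff_α : ∀ i ≤ k, α i = -((R i)ᵀ * D i * ((D i)ᵀ * A * D i)⁻¹)
  residual_succ : ∀ i ≤ k, R (i + 1) = R i + A * D i * (α i)ᵀ
  coeff_β : ∀ i ≤ k, β i = -((R (i + 1))ᵀ * A * D i * ((D i)ᵀ * A * D i)⁻¹)
  direction_succ : ∀ i ≤ k, D (i + 1) = R (i + 1) + D i * (β i)ᵀ

namespace IsCCG

variable {A : Matrix ι ι ℝ} {R D : ℕ → Matrix ι κ ℝ} {α β : ℕ → Matrix κ κ ℝ} {k : ℕ}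

theorem transpose_residual_succ_mul (h : IsCCG A R D α β k) (hA : A.IsSymm) {i : ℕ} (hi : i ≤ k)
    {m : Type*} (M : Matrix ι m ℝ) :
    (R (i + 1))ᵀ * M = (R i)ᵀ * M + α i * ((D i)ᵀ * A * M) := by
  rw [h.residual_succ i hi]
  simp only [transpose_add, transpose_mul, transpose_transpose, hA.eq, Matrix.add_mul,
    Matrix.mul_assoc]

theorem transpose_direction_succ_mul_mul (h : IsCCG A R D α β k) {i : ℕ} (hi : i ≤ k)
    {m : Type*} (M : Matrix ι m ℝ) :
    (D (i + 1))ᵀ * A * M = (R (i + 1))ᵀ * A * M + β i * ((D i)ᵀ * A * M) := by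
  rw [h.direction_succ i hi]
  simp only [transpose_add, transpose_mul, transpose_transpose, Matrix.add_mul,
    Matrix.mul_assoc]

theorem transpose_residual_succ_mul_direction (h : IsCCG A R D α β k) (hA : A.IsSymm) {i : ℕ}
    (hi : i ≤ k) : (R (i + 1))ᵀ * D i = 0 := by
  rw [h.transpose_residual_succ_mul hA hi, h.coeff_α i hi]
  exact add_neg_mul_nonsing_inv_mul_cancel _ (h.isUnit_det_gram i hi)

theorem transpose_direction_succ_mul_mul_direction (h : IsCCG A R D α β k) {i : ℕ} (hi : i ≤ k) :
    (D (i + 1))ᵀ * A * D i = 0 := by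
  rw [h.transpose_direction_succ_mul_mul hi, h.coeff_β i hi]
  exact add_neg_mul_nonsing_inv_mul_cancel _ (h.isUnit_det_gram i hi)

theorem mulVec_injective_residual (h : IsCCG A R D α β k) (hA : A.PosDef)
    (hD : ∀ i ≤ k, Function.Injective (D i).mulVec) {i : ℕ} (hi : i ≤ k) :
    Function.Injective (R i).mulVec := by
  rcases i with _ | i
  · rw [← h.direction_zero]; exact hD 0 hi
  · refine (injective_iff_map_eq_zero (R (i + 1)).mulVecLin).2 fun v hv => hD (i + 1) hi ?_
    have hDv : D (i + 1) *ᵥ v = D i *ᵥ ((β i)ᵀ *ᵥ v) := by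
      rw [h.direction_succ i (by omega), add_mulVec, ← mulVecLin_apply, hv, zero_add,
        mulVec_mulVec]
    rw [hA.mulVec_eq_zero_of_transpose_mul_mul_eq_zero
      (h.transpose_direction_succ_mul_mul_direction (by omega)) hDv, mulVec_zero]

theorem transpose_residual_mul_direction_self (h : IsCCG A R D α β k) (hA : A.IsSymm) {i : ℕ}
    (hi : i ≤ k) : (R i)ᵀ * D i = (R i)ᵀ * R i := by
  rcases i with _ | i
  · rw [h.direction_zero]
  · rw [h.direction_succ i (by omega), Matrix.mul_add, ← Matrix.mul_assoc,
      h.transpose_residual_succ_mul_direction hA (by omega), Matrix.zero_mul, add_zero]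

theorem isUnit_coeff_α (h : IsCCG A R D α β k) (hA : A.PosDef)
    (hD : ∀ i ≤ k, Function.Injective (D i).mulVec) {i : ℕ} (hi : i ≤ k) : IsUnit (α i) := by
  have hRR : ((R i)ᵀ * R i).PosDef := by
    simpa only [conjTranspose_eq_transpose_of_trivial] using
      PosDef.conjTranspose_mul_self _ (h.mulVec_injective_residual hA hD hi)
  have hAs : A.IsSymm := isHermitian_iff_isSymm.1 hA.isHermitian
  rw [h.coeff_α i hi, h.transpose_residual_mul_direction_self hAs hi]
  exact (hRR.isUnit.mul (isUnit_nonsing_inv_iff.2 ((isUnit_iff_isUnit_det _).2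
    (h.isUnit_det_gram i hi)))).neg

theorem mul_residual_eq_zero (h : IsCCG A R D α β k) {m : Type*} {N : Matrix m ι ℝ} {j : ℕ}
    (hj : j ≤ k + 1) (hN : ∀ i ≤ j, N * D i = 0) : N * R j = 0 := by
  rcases j with _ | j
  · rw [← h.direction_zero]; exact hN 0 le_rfl
  · rw [eq_sub_of_add_eq (h.direction_succ j (by omega)).symm, Matrix.mul_sub,
      ← Matrix.mul_assoc, hN (j + 1) le_rfl, hN j (by omega), Matrix.zero_mul, sub_zero]

theorem mul_mul_direction_eq_zero (h : IsCCG A R D α β k) (hA : A.PosDef)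
    (hD : ∀ i ≤ k, Function.Injective (D i).mulVec) {m : Type*} {N : Matrix m ι ℝ} {i : ℕ}
    (hi : i ≤ k) (hN : N * R (i + 1) = 0) (hN' : N * R i = 0) : N * A * D i = 0 := by
  have := ((isUnit_transpose _).2 (h.isUnit_coeff_α hA hD hi)).invertible
  refine mul_left_injective_of_invertible (α i)ᵀ ?_
  dsimp only
  rw [Matrix.zero_mul, Matrix.mul_assoc, Matrix.mul_assoc, ← Matrix.mul_assoc A,
    ← add_sub_cancel_left (R i) (A * D i * (α i)ᵀ), ← h.residual_succ i hi, Matrix.mul_sub, hN,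
    hN', sub_zero]

theorem orthogonal_and_conjugate (h : IsCCG A R D α β k) (hA : A.PosDef)
    (hD : ∀ i ≤ k, Function.Injective (D i).mulVec) {j : ℕ} (hj : j ≤ k) :
    (∀ i ≤ j, (R (j + 1))ᵀ * D i = 0) ∧ ∀ i ≤ j, (D (j + 1))ᵀ * A * D i = 0 := by
  have hAs : A.IsSymm := isHermitian_iff_isSymm.1 hA.isHermitian
  induction j with
  | zero =>
    refine ⟨fun i hi => ?_, fun i hi => ?_⟩ <;> obtain rfl := Nat.le_zero.1 hi
    · exact h.transpose_residual_succ_mul_direction hAs hj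
    · exact h.transpose_direction_succ_mul_mul_direction hj
  | succ j ih =>
    obtain ⟨ihR, ihD⟩ := ih (by omega)
    have hR : ∀ i ≤ j + 1, (R (j + 2))ᵀ * D i = 0 := by
      intro i hi
      rcases Nat.le_succ_iff.1 hi with hi | rfl
      · rw [h.transpose_residual_succ_mul hAs hj, ihR i hi, ihD i hi, Matrix.mul_zero, add_zero]
      · exact h.transpose_residual_succ_mul_direction hAs hj
    refine ⟨hR, fun i hi => ?_⟩
    rcases Nat.le_succ_iff.1 hi with hi | rfl
    · have hRAD : (R (j + 2))ᵀ * A * D i = 0 :=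
        h.mul_mul_direction_eq_zero hA hD (by omega)
          (h.mul_residual_eq_zero (by omega) fun l hl => hR l (by omega))
          (h.mul_residual_eq_zero (by omega) fun l hl => hR l (by omega))
      rw [h.transpose_direction_succ_mul_mul hj, hRAD, ihD i hi, Matrix.mul_zero, add_zero]
    · exact h.transpose_direction_succ_mul_mul_direction hj

end IsCCG

theorem cCG_residue_image_outside_span_general
    (n p : ℕ)
    (A : Matrix (Fin n) (Fin n) ℝ) (hA : A.PosDef)
    (b : Fin n → ℝ) (k : ℕ)
    (X R D : ℕ → Matrix (Fin n) (Fin p) ℝ)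
    (α β : ℕ → Matrix (Fin p) (Fin p) ℝ)
    (hR : ∀ i, R i = A * X i - Matrix.vecMulVec b 1)
    (hD0 : D 0 = R 0)
    (hinv : ∀ i ≤ k, IsUnit ((D i)ᵀ * A * D i).det)
    (hrank : ∀ i ≤ k, (D i).rank = p)
    (hα : ∀ i ≤ k, α i = -((R i)ᵀ * D i * ((D i)ᵀ * A * D i)⁻¹))
    (hX : ∀ i ≤ k, X (i + 1) = X i + D i * (α i)ᵀ)
    (hβ : ∀ i ≤ k, β i = -((R (i + 1))ᵀ * A * D i * ((D i)ᵀ * A * D i)⁻¹))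
    (hDs : ∀ i ≤ k, D (i + 1) = R (i + 1) + D i * (β i)ᵀ)
    (hrankR : (R (k + 1)).rank = p)
    :
    ∀ v : Fin p → ℝ, v ≠ 0 → R (k + 1) *ᵥ v ∉ colSpan n p k D := by
  have hcg : IsCCG A R D α β k :=
    { direction_zero := hD0
      isUnit_det_gram := hinv
      coeff_α := hα
      residual_succ := fun i hi => by
        rw [hR, hR, hX i hi, Matrix.mul_add, ← Matrix.mul_assoc]
        abel
      coeff_β := hβ
      direction_succ := hDs }
  have hD : ∀ i ≤ k, Function.Injective (D i).mulVec := fun i hi =>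
    mulVec_injective_of_rank_eq_card (by rw [hrank i hi, Fintype.card_fin])
  have hRinj : Function.Injective (R (k + 1)).mulVec :=
    mulVec_injective_of_rank_eq_card (by rw [hrankR, Fintype.card_fin])
  exact fun v hv => mulVec_notMem_colSpan hRinj (hcg.orthogonal_and_conjugate hA hD le_rfl).1 hv

/-- If `D_iᵀAD_i` is invertible and `rank D_i = p` for all `0 ≤ i ≤ k`
in the cCG iteration, and moreover `rank R_{k+1} = p`, then for every nonzero
`v ∈ ℝᵖ`, the vector `R_{k+1}v` does not belong to `span[D_i]₀^k`. -/
theorem cCG_residue_image_outside_span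
    (n p : ℕ) (hn : 0 < n) (hp : 0 < p) (hpn : p ≤ n)
    (A : Matrix (Fin n) (Fin n) ℝ) (hA : A.PosDef)
    (b : Fin n → ℝ) (k : ℕ)
    (X R D : ℕ → Matrix (Fin n) (Fin p) ℝ)
    (α β : ℕ → Matrix (Fin p) (Fin p) ℝ)
    (hR : ∀ i, R i = A * X i - Matrix.vecMulVec b 1)
    (hD0 : D 0 = R 0)
    (hinv : ∀ i ≤ k, IsUnit ((D i)ᵀ * A * D i).det)
    (hrank : ∀ i ≤ k, (D i).rank = p)
    (hα : ∀ i ≤ k, α i = -((R i)ᵀ * D i * ((D i)ᵀ * A * D i)⁻¹))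
    (hX : ∀ i ≤ k, X (i + 1) = X i + D i * (α i)ᵀ)
    (hβ : ∀ i ≤ k, β i = -((R (i + 1))ᵀ * A * D i * ((D i)ᵀ * A * D i)⁻¹))
    (hDs : ∀ i ≤ k, D (i + 1) = R (i + 1) + D i * (β i)ᵀ)
    (hrankR : (R (k + 1)).rank = p)
    :
    ∀ v : Fin p → ℝ, v ≠ 0 → R (k + 1) *ᵥ v ∉ colSpan n p k D :=
  cCG_residue_image_outside_span_general n p A hA b k X R D α β hR hD0 hinv hrank hα hX hβ hDs
    hrankR
end

section
/- Let n be a real number with n ≥ 5 and define N(p) = n³/p + 6n² + n(p+1)(2p+1)/3 for real p > 0. Then for every real p with 1 ≤ p ≤ n, one has N(p) ≤ N(1). -/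
/-- For real `n ≥ 5` and `N(p) = n³/p + 6n² + n(p+1)(2p+1)/3`,
one has `N(p) ≤ N(1)` for every real `p` with `1 ≤ p ≤ n`. -/
theorem cCG_multithread_gain
    (n : ℝ) (hn : 5 ≤ n)
    (N : ℝ → ℝ)
    (hN : ∀ p : ℝ, N p = n ^ 3 / p + 6 * n ^ 2 + n * (p + 1) * (2 * p + 1) / 3) :
    ∀ p : ℝ, 1 ≤ p → p ≤ n → N p ≤ N 1 := by
  intro p hp hpn
  have hp0 : (0:ℝ) < p := by linarith
  rw [hN p, hN 1]
  rw [div_add' _ _ _ (ne_of_gt hp0), div_add_div _ _ (ne_of_gt hp0) (by norm_num : (3:ℝ) ≠ 0),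
      div_add' _ _ _ (by norm_num : (1:ℝ) ≠ 0), div_add_div _ _ (by norm_num : (1:ℝ) ≠ 0) (by norm_num : (3:ℝ) ≠ 0)]
  rw [div_le_div_iff₀ (by positivity) (by norm_num)]
  nlinarith [mul_nonneg (mul_nonneg (by linarith : (0:ℝ) ≤ n) (by linarith : (0:ℝ) ≤ p - 1)) (by nlinarith : (0:ℝ) ≤ 3*n^2 - p*(2*p+5))]
end

section
/- Fix a real number n > 0 and define N(p) = n³/p + 6n² + n(p+1)(2p+1)/3 for real p > 0. Then there exists a unique p* > 0 such that N(p*) ≤ N(p) for all p > 0; moreover this minimizer p* is the unique positive real solution of the equation n² = p²((4/3)p + 1). -/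
/-!
At a positive root `p` of `n² = p²((4/3)p + 1)` one may replace `n³` by `n p²((4/3)p + 1)`,
after which `N q - N p` factors as `n (q - p)² (2q + 4p + 3) / (3q)`, which is positive for
every `q > 0` other than `p`. So every positive root is a strict global minimiser on `(0, ∞)`;
in particular there is at most one positive root, and by the intermediate value theorem there
is one.
-/

noncomputable section

namespace CooperativeCG

def cost (n p : ℝ) : ℝ := n ^ 3 / p + 6 * n ^ 2 + n * (p + 1) * (2 * p + 1) / 3

theorem cost_sub_cost_of_root {n p : ℝ} (q : ℝ) (hq : q ≠ 0)
    (hroot : n ^ 2 = p ^ 2 * ((4 / 3) * p + 1)) :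
    cost n q - cost n p = n * (q - p) ^ 2 * (2 * q + 4 * p + 3) / (3 * q) := by
  have hn3 : n ^ 3 = n * (p ^ 2 * ((4 / 3) * p + 1)) := by rw [← hroot]; ring
  rw [cost, cost, hn3]
  field_simp
  ring

theorem cost_lt_cost_of_root {n p q : ℝ} (hn : 0 < n) (hp : 0 < p) (hq : 0 < q) (hqp : q ≠ p)
    (hroot : n ^ 2 = p ^ 2 * ((4 / 3) * p + 1)) :
    cost n p < cost n q := by
  have hsq : 0 < (q - p) ^ 2 := sq_pos_of_ne_zero (sub_ne_zero.mpr hqp)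
  have hpos : 0 < n * (q - p) ^ 2 * (2 * q + 4 * p + 3) / (3 * q) := by positivity
  linarith [cost_sub_cost_of_root q hq.ne' hroot]

theorem cost_le_cost_of_root {n p q : ℝ} (hn : 0 < n) (hp : 0 < p) (hq : 0 < q)
    (hroot : n ^ 2 = p ^ 2 * ((4 / 3) * p + 1)) :
    cost n p ≤ cost n q := by
  rcases eq_or_ne q p with rfl | hqp
  · exact le_rfl
  · exact (cost_lt_cost_of_root hn hp hq hqp hroot).le

theorem exists_pos_root {n : ℝ} (hn : 0 < n) :
    ∃ p, 0 < p ∧ n ^ 2 = p ^ 2 * ((4 / 3) * p + 1) := by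
  have hcont : ContinuousOn (fun p : ℝ => p ^ 2 * ((4 / 3) * p + 1)) (Set.Icc 0 n) := by
    fun_prop
  have hmem : n ^ 2 ∈ Set.Ioc ((0 : ℝ) ^ 2 * ((4 / 3) * 0 + 1)) (n ^ 2 * ((4 / 3) * n + 1)) :=
    ⟨by norm_num; positivity, by nlinarith [sq_nonneg n]⟩
  obtain ⟨p, hp, hroot⟩ := intermediate_value_Ioc hn.le hcont hmem
  exact ⟨p, hp.1, hroot.symm⟩

end CooperativeCG

open CooperativeCG in
/-- For a fixed real `n > 0` and `N(p) = n³/p + 6n² + n(p+1)(2p+1)/3`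
on `p > 0`, there exists a unique `p* > 0` minimizing `N` over `(0, ∞)`; moreover a
positive real `p` is this minimizer if and only if it solves `n² = p²((4/3)p + 1)`
(so `p*` is the unique positive solution of that equation). -/
theorem cCG_unique_optimal_processor_number
    (n : ℝ) (hn : 0 < n)
    (N : ℝ → ℝ)
    (hN : ∀ p : ℝ, N p = n ^ 3 / p + 6 * n ^ 2 + n * (p + 1) * (2 * p + 1) / 3) :
    (∃! pstar : ℝ, 0 < pstar ∧ ∀ q : ℝ, 0 < q → N pstar ≤ N q) ∧
      ∀ p : ℝ, 0 < p →
        ((∀ q : ℝ, 0 < q → N p ≤ N q) ↔ n ^ 2 = p ^ 2 * ((4 / 3) * p + 1)) := by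
  obtain rfl : N = cost n := funext hN
  obtain ⟨p₀, hp₀, hroot₀⟩ := exists_pos_root hn
  have eq_of_isMin : ∀ p, 0 < p → (∀ q, 0 < q → cost n p ≤ cost n q) → p = p₀ :=
    fun p hp hmin => by_contra fun hne =>
      (cost_lt_cost_of_root hn hp₀ hp hne hroot₀).not_ge (hmin p₀ hp₀)
  refine ⟨⟨p₀, ⟨hp₀, fun q hq => cost_le_cost_of_root hn hp₀ hq hroot₀⟩,
    fun p ⟨hp, hmin⟩ => eq_of_isMin p hp hmin⟩, fun p hp => ⟨fun hmin => ?_,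
    fun hroot q hq => cost_le_cost_of_root hn hp hq hroot⟩⟩
  rwa [eq_of_isMin p hp hmin]
end
end

section
/- For each real n > 0, let p*(n) denote the unique positive real solution of n² = p²((4/3)p + 1) (equivalently, the unique minimizer over p > 0 of N(p) = n³/p + 6n² + n(p+1)(2p+1)/3). Then p*(n)/n^{2/3} → (3/4)^{1/3} as n → ∞. -/
/-!
With `s = n^(2/3)` and `q = p*(n) / s`, the defining equation `n² = p²((4/3)p + 1)` reads
`(4/3) q³ + q² / s = 1`. Hence `q ≤ 1`, so `q³` is within `1 / s` of `3/4`; as `s → ∞`,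
`q³ → 3/4`, and taking cube roots gives the limit.
-/

open Filter Topology

lemma Filter.Tendsto.of_pow_natCast {α : Type*} {l : Filter α} {f : α → ℝ} {a : ℝ} {k : ℕ}
    (hk : k ≠ 0) (hf : ∀ᶠ x in l, 0 ≤ f x) (h : Tendsto (fun x => f x ^ k) l (𝓝 a)) :
    Tendsto f l (𝓝 (a ^ (k⁻¹ : ℝ))) := by
  refine (h.rpow_const (Or.inr (by positivity))).congr' ?_
  filter_upwards [hf] with x hx using Real.pow_rpow_inv_natCast hx hk

lemma rpow_two_div_three_pow_three {x : ℝ} (hx : 0 ≤ x) : (x ^ ((2 : ℝ) / 3)) ^ 3 = x ^ 2 := by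
  rw [← Real.rpow_mul_natCast hx]
  norm_num

lemma scaled_cubic_eq_one {p s : ℝ} (hs : 0 < s) (h : s ^ 3 = p ^ 2 * (4 / 3 * p + 1)) :
    4 / 3 * (p / s) ^ 3 + (p / s) ^ 2 / s = 1 := by
  field_simp
  linear_combination -3 * h

lemma abs_cube_sub_three_fourths_le {q s : ℝ} (hs : 0 < s) (hq : 0 ≤ q)
    (h : 4 / 3 * q ^ 3 + q ^ 2 / s = 1) : |q ^ 3 - 3 / 4| ≤ 1 / s := by
  have hq1 : q ≤ 1 := by
    have : q ^ 3 ≤ 1 := by nlinarith [div_nonneg (sq_nonneg q) hs.le]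
    exact (pow_le_one_iff_of_nonneg hq (by norm_num)).1 this
  have hsq : q ^ 2 / s ≤ 1 / s := by gcongr; nlinarith
  rw [abs_le]
  constructor <;> nlinarith [div_nonneg (sq_nonneg q) hs.le]

/-- If `p*(n)` denotes, for each real `n > 0`, the unique positive real
solution of `n² = p²((4/3)p + 1)` (the minimizer of `N(p) = n³/p + 6n² + n(p+1)(2p+1)/3`
over `p > 0`), then `p*(n)/n^{2/3} → (3/4)^{1/3}` as `n → ∞`. -/
theorem cCG_optimal_processors_asymptotics
    (pstar : ℝ → ℝ)
    (hpstar : ∀ n : ℝ, 0 < n →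
      0 < pstar n ∧ n ^ 2 = (pstar n) ^ 2 * ((4 / 3) * pstar n + 1)) :
    Tendsto (fun n : ℝ => pstar n / n ^ ((2 : ℝ) / 3)) atTop
      (nhds ((3 / 4 : ℝ) ^ ((1 : ℝ) / 3))) := by
  have hs : Tendsto (fun n : ℝ => n ^ ((2 : ℝ) / 3)) atTop atTop :=
    tendsto_rpow_atTop (by norm_num)
  have hcube : Tendsto (fun n => (pstar n / n ^ ((2 : ℝ) / 3)) ^ 3) atTop (𝓝 (3 / 4)) := by
    rw [← tendsto_sub_nhds_zero_iff]
    refine squeeze_zero_norm' ?_ (by simpa using hs.inv_tendsto_atTop)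
    filter_upwards [eventually_gt_atTop 0] with n hn
    have hsn : 0 < n ^ ((2 : ℝ) / 3) := by positivity
    obtain ⟨hp, heq⟩ := hpstar n hn
    rw [Real.norm_eq_abs, Pi.inv_apply, ← one_div]
    refine abs_cube_sub_three_fourths_le hsn (div_nonneg hp.le hsn.le) (scaled_cubic_eq_one hsn ?_)
    rw [rpow_two_div_three_pow_three hn.le, heq]
  have hnonneg : ∀ᶠ n in atTop, 0 ≤ pstar n / n ^ ((2 : ℝ) / 3) := by
    filter_upwards [eventually_gt_atTop 0] with n hn
    have hp := (hpstar n hn).1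
    positivity
  simpa using hcube.of_pow_natCast three_ne_zero hnonneg
end

section
/- For each real n > 0, let p*(n) denote the unique positive real solution of n² = p²((4/3)p + 1), and let N(p) = n³/p + 6n² + n(p+1)(2p+1)/3. Then N(p*(n))/n^{7/3} → (4/3)^{1/3} + (2/3)(3/4)^{2/3} as n → ∞ (so the optimally multithreaded cCG algorithm has worst-case cost O(n^{2+1/3}) multiplications, with constant approximately 1.651). -/
open Filter Topology

/-! With `t = n^{1/3}` and `q = p*/t²`, the optimality equation reads `(4/3) q³ + q²/t² = 1`,
so `q → (3/4)^{1/3}` as `t → ∞`, while `N(p*)/n^{7/3} = 1/q + (2/3) q² + O(1/t)`. -/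

theorem tendsto_rpow_inv_natCast_of_tendsto_pow {α : Type*} {l : Filter α} {f : α → ℝ} {L : ℝ}
    {k : ℕ} (hk : k ≠ 0) (hf : ∀ᶠ x in l, 0 ≤ f x) (h : Tendsto (fun x => f x ^ k) l (𝓝 L)) :
    Tendsto f l (𝓝 (L ^ (k⁻¹ : ℝ))) :=
  (h.rpow_const (Or.inr (by positivity))).congr'
    (hf.mono fun _ hx => Real.pow_rpow_inv_natCast hx hk)

theorem tendsto_of_mul_pow_three_add_mul_sq_eq_one {α : Type*} {l : Filter α} {q ε : α → ℝ}
    {a : ℝ} (ha : 0 < a) (hε : Tendsto ε l (𝓝 0)) (hε_nonneg : ∀ᶠ x in l, 0 ≤ ε x)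
    (hq_nonneg : ∀ᶠ x in l, 0 ≤ q x) (hq : ∀ᶠ x in l, a * q x ^ 3 + ε x * q x ^ 2 = 1) :
    Tendsto q l (𝓝 (a⁻¹ ^ ((1 : ℝ) / 3))) := by
  have hεq : Tendsto (fun x => ε x * q x ^ 2) l (𝓝 0) := by
    -- `q ^ 2 ≤ 1 + q ^ 3 ≤ 1 + a⁻¹` bounds `q` uniformly.
    have hbound : Tendsto (fun x => ε x * (1 + a⁻¹)) l (𝓝 0) := by
      simpa using hε.mul_const (1 + a⁻¹)
    refine tendsto_of_tendsto_of_tendsto_of_le_of_le' tendsto_const_nhds hbound ?_ ?_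
    · filter_upwards [hε_nonneg] with x hx using by positivity
    · filter_upwards [hε_nonneg, hq_nonneg, hq] with x hεx hqx hx
      refine mul_le_mul_of_nonneg_left ?_ hεx
      have h3 : q x ^ 3 ≤ a⁻¹ := by
        rw [inv_eq_one_div, le_div_iff₀ ha]
        nlinarith [mul_nonneg hεx (sq_nonneg (q x))]
      nlinarith [sq_nonneg (q x - 1), mul_nonneg hqx (sq_nonneg (q x - 1))]
  have hcube : Tendsto (fun x => q x ^ 3) l (𝓝 a⁻¹) := by
    have := (hεq.const_sub 1).const_mul a⁻¹
    rw [sub_zero, mul_one] at this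
    refine this.congr' ?_
    filter_upwards [hq] with x hx
    field_simp
    linarith
  simpa using tendsto_rpow_inv_natCast_of_tendsto_pow three_ne_zero hq_nonneg hcube

theorem rpow_one_div_three_pow_three {n : ℝ} (hn : 0 ≤ n) : (n ^ ((1 : ℝ) / 3)) ^ 3 = n := by
  simpa using Real.rpow_inv_natCast_pow hn three_ne_zero

theorem rpow_seven_div_three {n : ℝ} (hn : 0 ≤ n) :
    n ^ ((7 : ℝ) / 3) = (n ^ ((1 : ℝ) / 3)) ^ 7 := by
  rw [← Real.rpow_natCast, ← Real.rpow_mul hn]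
  norm_num

theorem cost_div_rpow_seven_div_three {n p : ℝ} (hn : 0 < n) (hp : p ≠ 0) :
    (n ^ 3 / p + 6 * n ^ 2 + n * (p + 1) * (2 * p + 1) / 3) / n ^ ((7 : ℝ) / 3) =
      (p / (n ^ ((1 : ℝ) / 3)) ^ 2)⁻¹ + 6 * (n ^ ((1 : ℝ) / 3))⁻¹
        + 2 / 3 * (p / (n ^ ((1 : ℝ) / 3)) ^ 2) ^ 2
        + p / (n ^ ((1 : ℝ) / 3)) ^ 2 * ((n ^ ((1 : ℝ) / 3))⁻¹) ^ 2
        + ((n ^ ((1 : ℝ) / 3))⁻¹) ^ 4 / 3 := by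
  have ht : n ^ ((1 : ℝ) / 3) ≠ 0 := by positivity
  have hn3 := rpow_one_div_three_pow_three hn.le
  rw [rpow_seven_div_three hn.le]
  generalize n ^ ((1 : ℝ) / 3) = t at ht hn3 ⊢
  subst hn3
  field_simp
  ring

theorem optimality_eq_rescale {n p : ℝ} (hn : 0 < n) (h : n ^ 2 = p ^ 2 * (4 / 3 * p + 1)) :
    4 / 3 * (p / (n ^ ((1 : ℝ) / 3)) ^ 2) ^ 3
      + ((n ^ ((1 : ℝ) / 3))⁻¹) ^ 2 * (p / (n ^ ((1 : ℝ) / 3)) ^ 2) ^ 2 = 1 := by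
  have ht : n ^ ((1 : ℝ) / 3) ≠ 0 := by positivity
  have hn3 := rpow_one_div_three_pow_three hn.le
  generalize n ^ ((1 : ℝ) / 3) = t at ht hn3 ⊢
  subst hn3
  field_simp
  linear_combination -3 * h

/-- If `p*(n)` denotes, for each real `n > 0`, the unique positive real
solution of `n² = p²((4/3)p + 1)`, and `N(p) = n³/p + 6n² + n(p+1)(2p+1)/3`, then
`N(p*(n))/n^{7/3} → (4/3)^{1/3} + (2/3)(3/4)^{2/3}` as `n → ∞` (cost `O(n^{2+1/3})`,
with constant approximately `1.651`). -/
theorem cCG_optimal_cost_asymptotics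
    (pstar : ℝ → ℝ)
    (hpstar : ∀ n : ℝ, 0 < n →
      0 < pstar n ∧ n ^ 2 = (pstar n) ^ 2 * ((4 / 3) * pstar n + 1)) :
    Tendsto
      (fun n : ℝ =>
        (n ^ 3 / pstar n + 6 * n ^ 2 + n * (pstar n + 1) * (2 * pstar n + 1) / 3) /
          n ^ ((7 : ℝ) / 3))
      atTop
      (nhds ((4 / 3 : ℝ) ^ ((1 : ℝ) / 3) + (2 / 3) * (3 / 4 : ℝ) ^ ((2 : ℝ) / 3))) := by
  set c : ℝ := (4 / 3 : ℝ)⁻¹ ^ ((1 : ℝ) / 3)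
  set s : ℝ → ℝ := fun n => (n ^ ((1 : ℝ) / 3))⁻¹
  set q : ℝ → ℝ := fun n => pstar n / (n ^ ((1 : ℝ) / 3)) ^ 2
  have hs : Tendsto s atTop (𝓝 0) := (tendsto_rpow_atTop (by norm_num)).inv_tendsto_atTop
  have hq : Tendsto q atTop (𝓝 c) := by
    have hpos := eventually_gt_atTop (0 : ℝ)
    refine tendsto_of_mul_pow_three_add_mul_sq_eq_one (ε := fun n => s n ^ 2) (by norm_num)
      (by simpa using hs.pow 2) (.of_forall fun n => by positivity) ?_ ?_
    · filter_upwards [hpos] with n hn using div_nonneg (hpstar n hn).1.le (by positivity)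
    · filter_upwards [hpos] with n hn using optimality_eq_rescale hn (hpstar n hn).2
  have hlim := (((((hq.inv₀ (by positivity)).add (hs.const_mul 6)).add
    ((hq.pow 2).const_mul (2 / 3))).add (hq.mul (hs.pow 2))).add ((hs.pow 4).div_const 3))
  convert hlim.congr' ?_ using 2
  · have hinv : c⁻¹ = (4 / 3 : ℝ) ^ ((1 : ℝ) / 3) := by
      rw [← Real.inv_rpow (by norm_num), inv_inv]
    have hsq : c ^ 2 = (3 / 4 : ℝ) ^ ((2 : ℝ) / 3) := by
      rw [← Real.rpow_natCast, ← Real.rpow_mul (by norm_num)]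
      norm_num
    rw [hinv, hsq]
    ring
  · filter_upwards [eventually_gt_atTop 0] with n hn
    exact (cost_div_rpow_seven_div_three hn (hpstar n hn).1.ne').symm
end
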